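/- arXiv:math/0506147 — 9 statements merged into one kernel-verified Lean document; each statement's English description precedes it below -/
import Mathlib

section
/- Let n ≥ 1. The map sending a family of nonnegative integers (b_k^i) for 1 ≤ i ≤ n, i < k ≤ n+1, to the monomial M = ∏_{i=1}^n ( X_i(-i)^{-∑_{k=i+1}^{n+1} b_k^i} · ∏_{k=i+1}^{n+1} X_k(-i)^{b_k^i} ) in the free abelian group on the symbols Y_i(m) is injective. (Here X_i(m) = Y_i(m)Y_{i-1}(m+1)^{-1}.) -/
open Finset

/-- Free abelian group (additively) on symbols `Y i m`, `1 ≤ i ≤ n`, `m : ℤ`,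
with the convention `Y_0 = Y_{n+1} = 1` (the identity). -/
noncomputable def Ygen (n i : ℕ) (m : ℤ) : (ℕ × ℤ) →₀ ℤ :=
  if 1 ≤ i ∧ i ≤ n then Finsupp.single (i, m) 1 else 0

/-- `X_i(m) = Y_i(m) · Y_{i-1}(m+1)⁻¹`, written additively. -/
noncomputable def Xgen (n i : ℕ) (m : ℤ) : (ℕ × ℤ) →₀ ℤ :=
  Ygen n i m - Ygen n (i - 1) (m + 1)

/-- The monomial `M = ∏_{i=1}^n ( X_i(-i)^{-∑_{k=i+1}^{n+1} b_k^i} ·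
∏_{k=i+1}^{n+1} X_k(-i)^{b_k^i} )` attached to the family `(b_k^i)`
(`b k i` encodes `b_k^i`), written additively. -/
noncomputable def Mform (n : ℕ) (b : ℕ → ℕ → ℕ) : (ℕ × ℤ) →₀ ℤ :=
  ∑ i ∈ Finset.Icc 1 n,
    ((-(∑ k ∈ Finset.Icc (i + 1) (n + 1), (b k i : ℤ))) • Xgen n i (-(i : ℤ))
      + ∑ k ∈ Finset.Icc (i + 1) (n + 1), (b k i : ℤ) • Xgen n k (-(i : ℤ)))

lemma Ygen_apply (n a : ℕ) (m' : ℤ) (j : ℕ) (m : ℤ) :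
    Ygen n a m' (j, m) = if 1 ≤ a ∧ a ≤ n ∧ a = j ∧ m' = m then 1 else 0 := by
  unfold Ygen
  by_cases h1 : 1 ≤ a ∧ a ≤ n
  · simp [h1, Finsupp.single_apply, Prod.ext_iff, and_assoc]
  · simp only [h1, if_false, Finsupp.coe_zero, Pi.zero_apply]
    rw [if_neg]; tauto

lemma Xgen_apply (n k : ℕ) (m' : ℤ) (j : ℕ) (m : ℤ) :
    Xgen n k m' (j, m) = (if 1 ≤ k ∧ k ≤ n ∧ k = j ∧ m' = m then 1 else 0)
      - (if 1 ≤ k - 1 ∧ k - 1 ≤ n ∧ k - 1 = j ∧ m' + 1 = m then 1 else 0) := by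
  simp [Xgen, Finsupp.sub_apply, Ygen_apply]

lemma Mform_apply (n : ℕ) (b : ℕ → ℕ → ℕ) (j : ℕ) (m : ℤ) :
    (Mform n b) (j, m) = ∑ i ∈ Icc 1 n,
      ((-(∑ k ∈ Icc (i + 1) (n + 1), (b k i : ℤ))) * Xgen n i (-(i : ℤ)) (j, m)
        + ∑ k ∈ Icc (i + 1) (n + 1), (b k i : ℤ) * Xgen n k (-(i : ℤ)) (j, m)) := by
  simp [Mform, Finsupp.finset_sum_apply, Finsupp.add_apply, Finsupp.smul_apply, smul_eq_mul]

lemma coeffA (n : ℕ) (b : ℕ → ℕ → ℕ) (j : ℕ) (hj : 1 ≤ j) (hjn : j ≤ n) :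
    (Mform n b) (j, (0 : ℤ)) = -(b (j + 1) 1 : ℤ) := by
  rw [Mform_apply]
  have hsub : ({1} : Finset ℕ) ⊆ Icc 1 n := by
    intro x; simp; omega
  rw [← Finset.sum_subset hsub ?_]
  · rw [Finset.sum_singleton]
    have h1 : Xgen n 1 (-((1 : ℕ) : ℤ)) (j, (0:ℤ)) = 0 := by
      rw [Xgen_apply, if_neg (by rintro ⟨-, -, -, hc⟩; norm_num at hc),
        if_neg (by rintro ⟨hc, -⟩; omega)]; ring
    rw [h1, mul_zero, zero_add]
    have h2 : ∀ k ∈ Icc (1 + 1) (n + 1), (b k 1 : ℤ) * Xgen n k (-((1 : ℕ) : ℤ)) (j, (0:ℤ)) =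
        if k = j + 1 then -(b k 1 : ℤ) else 0 := by
      intro k hk; simp only [mem_Icc] at hk
      rw [Xgen_apply, if_neg (by rintro ⟨-, -, -, hc⟩; norm_num at hc)]
      by_cases hkj : k = j + 1
      · rw [if_pos ⟨by omega, by omega, by omega, by norm_num⟩, if_pos hkj]; ring
      · rw [if_neg (by rintro ⟨-, -, h3, -⟩; omega), if_neg hkj]; ring
    rw [Finset.sum_congr rfl h2, Finset.sum_ite_eq' _ (j+1), if_pos (by simp; omega)]
  · intro x hx hnx
    simp only [mem_Icc] at hx
    simp only [Finset.mem_singleton] at hnx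
    have hz : ∀ k, Xgen n k (-((x : ℕ) : ℤ)) (j, (0:ℤ)) = 0 := by
      intro k
      rw [Xgen_apply, if_neg (by push_cast; omega), if_neg (by push_cast; omega)]; ring
    simp [hz]

lemma coeffB (n : ℕ) (b : ℕ → ℕ → ℕ) (t j : ℕ) (ht : 1 ≤ t) (htj : t < j) (hjn : j ≤ n) :
    (Mform n b) (j, -(t : ℤ)) = (b j t : ℤ) - (b (j + 1) (t + 1) : ℤ) := by
  rw [Mform_apply]
  have hsub : ({t, t + 1} : Finset ℕ) ⊆ Icc 1 n := by
    intro x; simp; omega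
  rw [← Finset.sum_subset hsub ?_]
  · rw [Finset.sum_insert (by simp), Finset.sum_singleton]
    -- block i = t
    have h1 : Xgen n t (-((t : ℕ) : ℤ)) (j, -(t:ℤ)) = 0 := by
      rw [Xgen_apply, if_neg (by push_cast; omega), if_neg (by push_cast; omega)]; ring
    have h2 : ∀ k ∈ Icc (t + 1) (n + 1), (b k t : ℤ) * Xgen n k (-((t : ℕ) : ℤ)) (j, -(t:ℤ)) =
        if k = j then (b k t : ℤ) else 0 := by
      intro k hk; simp only [mem_Icc] at hk
      rw [Xgen_apply]
      by_cases hkj : k = j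
      · rw [if_pos ⟨by omega, by omega, hkj, rfl⟩, if_neg (by push_cast; omega), if_pos hkj]; ring
      · rw [if_neg (by rintro ⟨-, -, h3, -⟩; omega), if_neg (by push_cast; omega), if_neg hkj]
        ring
    -- block i = t + 1
    have h3 : Xgen n (t + 1) (-(((t + 1) : ℕ) : ℤ)) (j, -(t:ℤ)) = 0 := by
      rw [Xgen_apply, if_neg (by push_cast; omega), if_neg (by push_cast; omega)]; ring
    have h4 : ∀ k ∈ Icc (t + 1 + 1) (n + 1),
        (b k (t + 1) : ℤ) * Xgen n k (-(((t + 1) : ℕ) : ℤ)) (j, -(t:ℤ)) =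
        if k = j + 1 then -(b k (t + 1) : ℤ) else 0 := by
      intro k hk; simp only [mem_Icc] at hk
      rw [Xgen_apply, if_neg (by push_cast; omega)]
      by_cases hkj : k = j + 1
      · rw [if_pos ⟨by omega, by omega, by omega, by push_cast; ring⟩, if_pos hkj]; ring
      · rw [if_neg (by rintro ⟨-, -, h5, -⟩; omega), if_neg hkj]; ring
    rw [h1, h3, mul_zero, mul_zero, zero_add, zero_add,
      Finset.sum_congr rfl h2, Finset.sum_congr rfl h4,
      Finset.sum_ite_eq' _ j, Finset.sum_ite_eq' _ (j+1),
      if_pos (by simp; omega), if_pos (by simp; omega)]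
    ring
  · intro x hx hnx
    simp only [mem_Icc] at hx
    simp only [Finset.mem_insert, Finset.mem_singleton] at hnx
    push_neg at hnx
    obtain ⟨hx1, hx2⟩ := hnx
    have hz : ∀ k, Xgen n k (-((x : ℕ) : ℤ)) (j, -(t:ℤ)) = 0 := by
      intro k
      rw [Xgen_apply, if_neg (by push_cast; omega), if_neg (by push_cast; omega)]; ring
    simp [hz]

/-- The map `(b_k^i) ↦ M` is injective. -/
theorem Mform_injective (n : ℕ) (hn : 1 ≤ n) (b b' : ℕ → ℕ → ℕ)
    (h : Mform n b = Mform n b') :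
    ∀ i ∈ Finset.Icc 1 n, ∀ k ∈ Finset.Icc (i + 1) (n + 1), b k i = b' k i := by
  have key : ∀ i, 1 ≤ i → i ≤ n → ∀ k, i + 1 ≤ k → k ≤ n + 1 → b k i = b' k i := by
    intro i
    induction i with
    | zero => omega
    | succ i ih =>
      intro h1 hn' k hk1 hk2
      have hkk : k - 1 + 1 = k := by omega
      rcases Nat.eq_zero_or_pos i with h0 | hpos
      · subst h0
        show b k 1 = b' k 1
        have hc := DFunLike.congr_fun h ((k - 1 : ℕ), (0 : ℤ))
        rw [coeffA n b (k - 1) (by omega) (by omega),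
          coeffA n b' (k - 1) (by omega) (by omega), hkk] at hc
        omega
      · have hji := ih hpos (by omega) (k - 1) (by omega) (by omega)
        have hc := DFunLike.congr_fun h ((k - 1 : ℕ), -((i : ℕ) : ℤ))
        rw [coeffB n b i (k - 1) hpos (by omega) (by omega),
          coeffB n b' i (k - 1) hpos (by omega) (by omega), hkk] at hc
        omega
  intro i hi k hk
  simp only [Finset.mem_Icc] at hi hk
  exact key i hi.1 hi.2 k hk.1 hk.2
end

section
/- For dominant integral weights μ = ∑ m_iΛ_i and τ = ∑ t_iΛ_i of type A_n (all m_i, t_i ≥ 0), one has M(μ+τ) = M(μ)·M(τ), where M(λ) is the set of monomials ∏_{i=1}^n ∏_{k=i}^{n+1} X_k(-i)^{b_k^i} with b_k^i ≥ 0, ∑_{j=i}^{n+1} b_j^i = ∑_{k=i}^n l_k for each i, and ∑_{k=0}^{j} b_{i+k}^i ≥ ∑_{k=0}^{j} b_{i+1+k}^{i+1} for 0 ≤ j ≤ n-1, 1 ≤ i ≤ n-max{1,j}, and M(μ)M(τ) = { M·M' : M ∈ M(μ), M' ∈ M(τ) }. -/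
open Finset

/-- Row sums `l_i + l_{i+1} + ⋯ + l_n` (zero outside `1 ≤ i ≤ n`). -/
def rowLen (n : ℕ) (l : ℕ → ℕ) (i : ℕ) : ℕ :=
  if 1 ≤ i ∧ i ≤ n then ∑ k ∈ Finset.Icc i n, l k else 0

/-- The defining conditions of `M(λ)` for `λ = ∑ l_iΛ_i` on an exponent family
`(b_k^i)` (encoded as `b k i`): `b_k^i ≥ 0` (automatic), support in
`1 ≤ i ≤ n`, `i ≤ k ≤ n+1`, row sums `∑_{j=i}^{n+1} b_j^i = ∑_{k=i}^n l_k`,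
and partial-sum dominance `∑_{k=0}^{j} b_{i+k}^i ≥ ∑_{k=0}^{j} b_{i+1+k}^{i+1}`
for `0 ≤ j ≤ n-1`, `1 ≤ i ≤ n - max 1 j`. -/
def MlaCond (n : ℕ) (l : ℕ → ℕ) (b : ℕ → ℕ → ℕ) : Prop :=
  (∀ k i, ¬(1 ≤ i ∧ i ≤ n ∧ i ≤ k ∧ k ≤ n + 1) → b k i = 0) ∧
  (∀ i, 1 ≤ i → i ≤ n → ∑ j ∈ Finset.Icc i (n + 1), b j i = rowLen n l i) ∧
  (∀ j, j ≤ n - 1 → ∀ i, 1 ≤ i → i ≤ n - max 1 j →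
    ∑ k ∈ Finset.range (j + 1), b (i + 1 + k) (i + 1)
      ≤ ∑ k ∈ Finset.range (j + 1), b (i + k) i)

/-- partial sums of row `i` -/
def psum (b : ℕ → ℕ → ℕ) (i j : ℕ) : ℕ := ∑ k ∈ Finset.range (j + 1), b (i + k) i

lemma psum_mono (b : ℕ → ℕ → ℕ) (i : ℕ) {j j' : ℕ} (h : j ≤ j') :
    psum b i j ≤ psum b i j' :=
  Finset.sum_le_sum_of_subset (Finset.range_subset_range.2 (by omega))

lemma rowLen_add (n : ℕ) (p q : ℕ → ℕ) (i : ℕ) :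
    rowLen n (fun i => p i + q i) i = rowLen n p i + rowLen n q i := by
  unfold rowLen
  split_ifs with h
  · exact Finset.sum_add_distrib
  · rfl

lemma rowLen_anti (n : ℕ) (l : ℕ → ℕ) {i : ℕ} (h1 : 1 ≤ i) :
    rowLen n l (i + 1) ≤ rowLen n l i := by
  unfold rowLen
  by_cases h : i + 1 ≤ n
  · rw [if_pos ⟨by omega, h⟩, if_pos ⟨h1, by omega⟩]
    exact Finset.sum_le_sum_of_subset (Finset.Icc_subset_Icc (by omega) le_rfl)
  · rw [if_neg (by omega)]
    exact Nat.zero_le _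

lemma rowLen_single (n m i : ℕ) (h1 : 1 ≤ i) (hm2 : m ≤ n) :
    rowLen n (fun i => if i = m then 1 else 0) i = if i ≤ m then 1 else 0 := by
  unfold rowLen
  by_cases hin : i ≤ n
  · rw [if_pos ⟨h1, hin⟩, Finset.sum_ite_eq' (Icc i n) m (fun _ => 1)]
    by_cases h : i ≤ m
    · rw [if_pos (Finset.mem_Icc.2 ⟨h, hm2⟩), if_pos h]
    · rw [if_neg (by simp only [Finset.mem_Icc]; omega), if_neg h]
  · rw [if_neg (by omega), if_neg (by omega)]

/-- easy direction: componentwise sums -/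
lemma MlaCond_add {n : ℕ} {p q : ℕ → ℕ} {x y : ℕ → ℕ → ℕ}
    (hx : MlaCond n p x) (hy : MlaCond n q y) :
    MlaCond n (fun i => p i + q i) (fun k i => x k i + y k i) := by
  obtain ⟨hx1, hx2, hx3⟩ := hx
  obtain ⟨hy1, hy2, hy3⟩ := hy
  refine ⟨fun k i h => ?_, fun i h1 h2 => ?_, fun j hj i h1 h2 => ?_⟩
  · show x k i + y k i = 0
    rw [hx1 k i h, hy1 k i h]
  · show (∑ j ∈ Finset.Icc i (n + 1), (x j i + y j i)) = _
    rw [Finset.sum_add_distrib, hx2 i h1 h2, hy2 i h1 h2, rowLen_add]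
  · show (∑ k ∈ Finset.range (j + 1), (x (i+1+k) (i+1) + y (i+1+k) (i+1)))
      ≤ ∑ k ∈ Finset.range (j + 1), (x (i+k) i + y (i+k) i)
    rw [Finset.sum_add_distrib, Finset.sum_add_distrib]
    exact Nat.add_le_add (hx3 j hj i h1 h2) (hy3 j hj i h1 h2)

section facts
variable {n : ℕ} {l : ℕ → ℕ} {b : ℕ → ℕ → ℕ}

lemma psum_stab (hb : MlaCond n l b) {i j j' : ℕ} (h1 : 1 ≤ i)
    (hij : n + 1 - i ≤ j) (hjj : j ≤ j') : psum b i j' = psum b i j := by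
  unfold psum
  refine (Finset.sum_subset (Finset.range_subset_range.2 (by omega)) ?_).symm
  intro k _ hk
  simp only [Finset.mem_range] at hk
  exact hb.1 (i + k) i (by omega)

lemma sum_Icc_psum (b : ℕ → ℕ → ℕ) (i n : ℕ) (h : i ≤ n + 1) :
    ∑ j ∈ Finset.Icc i (n + 1), b j i = psum b i (n + 1 - i) := by
  have hIcc : Icc i (n + 1) = Ico i (n + 2) := by
    ext x
    simp only [Finset.mem_Icc, Finset.mem_Ico]
    omega
  rw [hIcc, Finset.sum_Ico_eq_sum_range (fun j => b j i) i (n + 2)]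
  unfold psum
  rw [show n + 2 - i = n + 1 - i + 1 from by omega]

lemma psum_rowLen (hb : MlaCond n l b) {i : ℕ} (h1 : 1 ≤ i) (h2 : i ≤ n) {j : ℕ}
    (hj : n + 1 - i ≤ j) : psum b i j = rowLen n l i := by
  rw [psum_stab hb h1 (le_refl (n + 1 - i)) hj, ← hb.2.1 i h1 h2,
    sum_Icc_psum b i n (by omega)]

lemma psum_dom (hb : MlaCond n l b) {i : ℕ} (h1 : 1 ≤ i) (h2 : i + 1 ≤ n) (j : ℕ) :
    psum b (i + 1) j ≤ psum b i j := by
  by_cases hj : j ≤ n - i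
  · refine hb.2.2 j (by omega) i h1 ?_
    rcases Nat.eq_zero_or_pos j with h | h
    · subst h
      simp only [max_self, Nat.max_eq_left (Nat.zero_le 1)]
      omega
    · rw [max_eq_right h]
      omega
  · calc psum b (i+1) j = rowLen n l (i+1) := psum_rowLen hb (by omega) h2 (by omega)
      _ ≤ rowLen n l i := rowLen_anti n l h1
      _ = psum b i (n + 1 - i) := (psum_rowLen hb h1 (by omega) le_rfl).symm
      _ ≤ psum b i j := psum_mono b i (by omega)

lemma psum_le_rowLen (hb : MlaCond n l b) {i : ℕ} (h1 : 1 ≤ i) (h2 : i ≤ n) (j : ℕ) :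
    psum b i j ≤ rowLen n l i := by
  rw [← psum_rowLen hb h1 h2 (le_refl (n + 1 - i))]
  by_cases h : j ≤ n + 1 - i
  · exact psum_mono b i h
  · rw [psum_stab hb h1 (le_refl (n + 1 - i)) (show n + 1 - i ≤ j by omega)]

end facts

lemma exists_pos_of_sum_pos {f : ℕ → ℕ} {j : ℕ} (h : 0 < ∑ k ∈ Finset.range (j + 1), f k) :
    ∃ k ≤ j, 0 < f k := by
  by_contra hc
  push_neg at hc
  rw [Finset.sum_eq_zero (fun k hk => by
    have hk' : k ≤ j := by simpa [Nat.lt_succ_iff] using hk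
    have := hc k hk'
    omega)] at h
  omega

lemma single_le_psum (b : ℕ → ℕ → ℕ) (i : ℕ) {d j : ℕ} (h : d ≤ j) :
    b (i + d) i ≤ psum b i j := by
  unfold psum
  exact Finset.single_le_sum (f := fun k => b (i + k) i) (fun _ _ => Nat.zero_le _)
    (Finset.mem_range.2 (by omega))

/-- the offsets of the strip to remove, `stripD b n m t` is the offset in row `m - t`. -/
def stripD (b : ℕ → ℕ → ℕ) (n m : ℕ) : ℕ → ℕ
  | 0 => Nat.findGreatest (fun d => 0 < b (m + d) m) (n + 1 - m)
  | t + 1 => Nat.findGreatest (fun d => 0 < b (m - (t + 1) + d) (m - (t + 1))) (stripD b n m t)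

lemma stripD_le (b : ℕ → ℕ → ℕ) (n m : ℕ) : ∀ t, stripD b n m t ≤ n + 1 - m
  | 0 => Nat.findGreatest_le _
  | t + 1 => le_trans (Nat.findGreatest_le _) (stripD_le b n m t)

/-- The core strip-extraction lemma. -/
lemma strip (n : ℕ) (l : ℕ → ℕ) (m : ℕ) (hm1 : 1 ≤ m) (hm2 : m ≤ n) (b : ℕ → ℕ → ℕ)
    (hb : MlaCond n (fun i => l i + (if i = m then 1 else 0)) b) :
    ∃ e : ℕ → ℕ → ℕ, MlaCond n (fun i => if i = m then 1 else 0) e ∧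
      (∀ k i, e k i ≤ b k i) ∧ MlaCond n l (fun k i => b k i - e k i) := by
  set lam : ℕ → ℕ := fun i => l i + (if i = m then 1 else 0) with hlam
  set D : ℕ → ℕ := fun i => stripD b n m (m - i) with hD
  have hrl : rowLen n lam m = rowLen n l m + 1 := by
    rw [hlam, rowLen_add n l _ m, rowLen_single n m m hm1 hm2, if_pos le_rfl]
  -- positivity along the strip
  have aux : ∀ t, t ≤ m - 1 → 0 < b ((m - t) + stripD b n m t) (m - t) := by
    intro t
    induction t with
    | zero =>
      intro _
      simp only [Nat.sub_zero, stripD]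
      have hrow : 0 < psum b m (n + 1 - m) := by
        rw [psum_rowLen hb hm1 hm2 le_rfl, hrl]
        omega
      obtain ⟨d, hd, hdp⟩ := exists_pos_of_sum_pos hrow
      exact Nat.findGreatest_spec (P := fun d => 0 < b (m + d) m) hd hdp
    | succ t ih =>
      intro ht
      have hi1 : 1 ≤ m - (t + 1) := by omega
      have hmt : m - t = m - (t + 1) + 1 := by omega
      have hprev := ih (by omega)
      simp only [stripD]
      set i := m - (t + 1) with hi
      rw [hmt] at hprev
      have h1 : 0 < psum b (i + 1) (stripD b n m t) :=
        lt_of_lt_of_le hprev (single_le_psum b (i + 1) le_rfl)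
      have h2 : 0 < psum b i (stripD b n m t) :=
        lt_of_lt_of_le h1 (psum_dom hb hi1 (by omega) _)
      obtain ⟨d, hd, hdp⟩ := exists_pos_of_sum_pos h2
      exact Nat.findGreatest_spec (P := fun d => 0 < b (i + d) i) hd hdp
  have hDpos : ∀ i, 1 ≤ i → i ≤ m → 0 < b (i + D i) i := by
    intro i h1 h2
    have := aux (m - i) (by omega)
    rwa [show m - (m - i) = i by omega] at this
  have hDle : ∀ i, 1 ≤ i → i + 1 ≤ m → D i ≤ D (i + 1) := by
    intro i h1 h2
    show stripD b n m (m - i) ≤ stripD b n m (m - (i + 1))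
    rw [show m - i = (m - (i + 1)) + 1 by omega]
    simp only [stripD]
    exact Nat.findGreatest_le _
  have hDbound : ∀ i, 1 ≤ i → i ≤ m → i + D i ≤ n + 1 := by
    intro i h1 h2
    have : D i ≤ n + 1 - m := stripD_le b n m _
    omega
  have hDmax_m : ∀ d, D m < d → b (m + d) m = 0 := by
    intro d hd
    by_cases hdn : d ≤ n + 1 - m
    · have heq : D m = Nat.findGreatest (fun d => 0 < b (m + d) m) (n + 1 - m) := by
        show stripD b n m (m - m) = _
        rw [Nat.sub_self]
        simp only [stripD]
      rw [heq] at hd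
      have hng : ¬ (0 < b (m + d) m) :=
        Nat.findGreatest_is_greatest (P := fun d => 0 < b (m + d) m) hd hdn
      omega
    · exact hb.1 (m + d) m (by omega)
  have hDmax : ∀ i, 1 ≤ i → i + 1 ≤ m → ∀ d, D i < d → d ≤ D (i + 1) → b (i + d) i = 0 := by
    intro i h1 h2 d hd hd'
    have heq : D i = Nat.findGreatest (fun d => 0 < b (i + d) i) (D (i + 1)) := by
      show stripD b n m (m - i) = _
      rw [show m - i = (m - (i + 1)) + 1 by omega]
      simp only [stripD]
      rw [show m - (m - (i + 1) + 1) = i by omega]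
    rw [heq] at hd
    have hng : ¬ (0 < b (i + d) i) :=
      Nat.findGreatest_is_greatest (P := fun d => 0 < b (i + d) i) hd hd'
    omega
  -- the strip
  set e : ℕ → ℕ → ℕ := fun k i => if 1 ≤ i ∧ i ≤ m ∧ k = i + D i then 1 else 0 with he
  have he_le : ∀ k i, e k i ≤ b k i := by
    intro k i
    show (if 1 ≤ i ∧ i ≤ m ∧ k = i + D i then 1 else 0) ≤ b k i
    split_ifs with hc
    · obtain ⟨h1, h2, rfl⟩ := hc
      exact hDpos i h1 h2
    · exact Nat.zero_le _
  have hepartial : ∀ i j, 1 ≤ i →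
      psum e i j = if i ≤ m ∧ D i ≤ j then 1 else 0 := by
    intro i j h1
    unfold psum
    by_cases him : i ≤ m
    · have hterm : ∀ k ∈ Finset.range (j + 1), e (i + k) i = if k = D i then 1 else 0 := by
        intro k _
        show (if 1 ≤ i ∧ i ≤ m ∧ i + k = i + D i then 1 else 0) = _
        by_cases hk : k = D i
        · rw [if_pos ⟨h1, him, by omega⟩, if_pos hk]
        · rw [if_neg (by omega), if_neg hk]
      rw [Finset.sum_congr rfl hterm, Finset.sum_ite_eq' (range (j+1)) (D i) (fun _ => 1)]
      by_cases hDij : D i ≤ j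
      · rw [if_pos (Finset.mem_range.2 (by omega)), if_pos ⟨him, hDij⟩]
      · rw [if_neg (by simp only [Finset.mem_range]; omega), if_neg (by omega)]
    · rw [Finset.sum_eq_zero (fun k _ => by
        show (if 1 ≤ i ∧ i ≤ m ∧ i + k = i + D i then 1 else 0) = 0
        rw [if_neg (by omega)]), if_neg (by omega)]
  have heM : MlaCond n (fun i => if i = m then 1 else 0) e := by
    refine ⟨?_, ?_, ?_⟩
    · intro k i h
      show (if 1 ≤ i ∧ i ≤ m ∧ k = i + D i then 1 else 0) = 0
      split_ifs with hc
      · exfalso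
        obtain ⟨h1, h2, rfl⟩ := hc
        exact h ⟨h1, le_trans h2 hm2, by omega, hDbound i h1 h2⟩
      · rfl
    · intro i h1 h2
      rw [rowLen_single n m i h1 hm2]
      by_cases him : i ≤ m
      · have hterm : ∀ j ∈ Finset.Icc i (n + 1), e j i = if j = i + D i then 1 else 0 := by
          intro j _
          show (if 1 ≤ i ∧ i ≤ m ∧ j = i + D i then 1 else 0) = _
          by_cases hj : j = i + D i
          · rw [if_pos ⟨h1, him, hj⟩, if_pos hj]
          · rw [if_neg (by tauto), if_neg hj]
        rw [Finset.sum_congr rfl hterm,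
          Finset.sum_ite_eq' (Icc i (n+1)) (i + D i) (fun _ => 1),
          if_pos (Finset.mem_Icc.2 ⟨by omega, hDbound i h1 him⟩), if_pos him]
      · rw [Finset.sum_eq_zero (fun j _ => by
          show (if 1 ≤ i ∧ i ≤ m ∧ j = i + D i then 1 else 0) = 0
          rw [if_neg (by omega)]), if_neg him]
    · intro j _ i h1 _
      show psum e (i + 1) j ≤ psum e i j
      rw [hepartial i j h1, hepartial (i + 1) j (by omega)]
      split_ifs with hc hc'
      · exact le_rfl
      · exfalso
        exact hc' ⟨by omega, le_trans (hDle i h1 (by omega)) hc.2⟩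
      · exact Nat.zero_le _
      · exact le_rfl
  -- psum of the difference
  have hsub : ∀ i j, psum (fun k i => b k i - e k i) i j = psum b i j - psum e i j := by
    intro i j
    have h : psum (fun k i => b k i - e k i) i j + psum e i j = psum b i j := by
      unfold psum
      rw [← Finset.sum_add_distrib]
      exact Finset.sum_congr rfl fun k _ => Nat.sub_add_cancel (he_le _ _)
    omega
  have hbe : MlaCond n l (fun k i => b k i - e k i) := by
    refine ⟨?_, ?_, ?_⟩
    · intro k i h
      show b k i - e k i = 0
      rw [hb.1 k i h]
      omega
    · intro i h1 h2
      show (∑ j ∈ Finset.Icc i (n+1), (b j i - e j i)) = rowLen n l i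
      have hsum : (∑ j ∈ Finset.Icc i (n+1), (b j i - e j i)) + ∑ j ∈ Finset.Icc i (n+1), e j i
          = ∑ j ∈ Finset.Icc i (n+1), b j i := by
        rw [← Finset.sum_add_distrib]
        exact Finset.sum_congr rfl fun j _ => Nat.sub_add_cancel (he_le _ _)
      have h3 := hb.2.1 i h1 h2
      have h4 := heM.2.1 i h1 h2
      have h5 : rowLen n lam i = rowLen n l i + rowLen n (fun i => if i = m then 1 else 0) i := by
        rw [hlam]
        exact rowLen_add n l _ i
      omega
    · intro j hj i h1 h2
      show psum (fun k i => b k i - e k i) (i + 1) j ≤ psum (fun k i => b k i - e k i) i j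
      rw [hsub, hsub, hepartial i j h1, hepartial (i + 1) j (by omega)]
      have hin : i + 1 ≤ n := by
        rcases Nat.eq_zero_or_pos j with h | h
        · subst h
          simp only [Nat.max_eq_left (Nat.zero_le 1)] at h2
          omega
        · rw [max_eq_right h] at h2
          omega
      have hAA' : psum b (i + 1) j ≤ psum b i j := psum_dom hb h1 hin j
      by_cases cm : i ≤ m ∧ D i ≤ j
      · by_cases cm' : i + 1 ≤ m ∧ D (i + 1) ≤ j
        · rw [if_pos cm, if_pos cm']
          exact Nat.sub_le_sub_right hAA' 1
        · -- hard case
          rw [if_pos cm, if_neg cm']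
          obtain ⟨him0, hDij⟩ := cm
          have key : psum b (i + 1) j + 1 ≤ psum b i j := by
            rcases Nat.lt_or_ge i m with him | him
            · -- i < m
              have hi1m : i + 1 ≤ m := him
              have hjD : j < D (i + 1) := by
                rcases Nat.lt_or_ge j (D (i + 1)) with h | h
                · exact h
                · exact absurd ⟨hi1m, h⟩ cm'
              have hstab : psum b i (D (i + 1)) = psum b i j := by
                unfold psum
                refine (Finset.sum_subset (Finset.range_subset_range.2 (by omega)) ?_).symm
                intro k hk1 hk2
                simp only [Finset.mem_range] at hk1 hk2
                exact hDmax i h1 hi1m k (by omega) (by omega)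
              have hsucc : psum b (i + 1) (D (i + 1))
                  = psum b (i + 1) (D (i + 1) - 1) + b ((i + 1) + D (i + 1)) (i + 1) := by
                unfold psum
                rw [Finset.sum_range_succ, show D (i + 1) - 1 + 1 = D (i + 1) by omega]
              have hstep : psum b (i + 1) j + 1 ≤ psum b (i + 1) (D (i + 1)) := by
                rw [hsucc]
                exact Nat.add_le_add (psum_mono b (i + 1) (by omega))
                  (hDpos (i + 1) (by omega) hi1m)
              calc psum b (i + 1) j + 1 ≤ psum b (i + 1) (D (i + 1)) := hstep
                _ ≤ psum b i (D (i + 1)) := psum_dom hb h1 hin _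
                _ = psum b i j := hstab
            · -- i = m
              have him' : i = m := by omega
              have hDi : ∀ d, D i < d → b (i + d) i = 0 := by
                rw [him']
                exact hDmax_m
              have hA : psum b i j = rowLen n lam i := by
                have h0 : psum b i (j + (n + 1 - i)) = rowLen n lam i :=
                  psum_rowLen hb h1 (by omega) (by omega)
                rw [← h0]
                unfold psum
                refine Finset.sum_subset (Finset.range_subset_range.2 (by omega)) ?_
                intro k hk1 hk2
                simp only [Finset.mem_range] at hk1 hk2
                exact hDi k (by omega)
              have hA' : psum b (i + 1) j ≤ rowLen n lam (i + 1) :=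
                psum_le_rowLen hb (by omega) hin j
              have e1 : rowLen n lam i = rowLen n l i + 1 := by
                rw [him', hrl]
              have e2 : rowLen n lam (i + 1) = rowLen n l (i + 1) := by
                rw [hlam, rowLen_add n l _ (i + 1), rowLen_single n m (i + 1) (by omega) hm2,
                  if_neg (by omega)]
                omega
              have e3 : rowLen n l (i + 1) ≤ rowLen n l i := rowLen_anti n l h1
              omega
          omega
      · rw [if_neg cm]
        split_ifs with hc'
        · exact le_trans (Nat.sub_le _ _) hAA'
        · exact Nat.sub_le_sub_right hAA' 0
  exact ⟨e, heM, he_le, hbe⟩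

lemma forward (n : ℕ) :
    ∀ N (μ τ : ℕ → ℕ), (∀ i, ¬(1 ≤ i ∧ i ≤ n) → τ i = 0) →
    (∑ i ∈ Finset.Icc 1 n, τ i) ≤ N →
    ∀ b : ℕ → ℕ → ℕ, MlaCond n (fun i => μ i + τ i) b →
      ∃ b₁ b₂ : ℕ → ℕ → ℕ, MlaCond n μ b₁ ∧ MlaCond n τ b₂ ∧
        b = fun k i => b₁ k i + b₂ k i := by
  have zero_case : ∀ (μ τ : ℕ → ℕ), (∀ i ∈ Finset.Icc 1 n, τ i = 0) →
      ∀ b : ℕ → ℕ → ℕ, MlaCond n (fun i => μ i + τ i) b →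
      ∃ b₁ b₂ : ℕ → ℕ → ℕ, MlaCond n μ b₁ ∧ MlaCond n τ b₂ ∧
        b = fun k i => b₁ k i + b₂ k i := by
    intro μ τ hτ0 b hb
    have hrow : ∀ i, rowLen n τ i = 0 := by
      intro i
      unfold rowLen
      split_ifs with h
      · exact Finset.sum_eq_zero fun k hk => hτ0 k
          (Finset.mem_Icc.2 ⟨le_trans h.1 (Finset.mem_Icc.1 hk).1, (Finset.mem_Icc.1 hk).2⟩)
      · rfl
    refine ⟨b, fun _ _ => 0, ⟨hb.1, fun i h1 h2 => ?_, hb.2.2⟩,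
      ⟨fun _ _ _ => rfl, fun i h1 h2 => by simp [hrow i],
        fun _ _ _ _ _ => by simp⟩, by funext k i; simp⟩
    have h3 := hb.2.1 i h1 h2
    have hadd := rowLen_add n μ τ i
    have h5 := hrow i
    omega
  intro N
  induction N with
  | zero =>
    intro μ τ hτ hsum b hb
    exact zero_case μ τ (fun i hi => Finset.sum_eq_zero_iff.1 (Nat.le_zero.1 hsum) i hi) b hb
  | succ N ih =>
    intro μ τ hτ hsum b hb
    by_cases h0 : ∑ i ∈ Finset.Icc 1 n, τ i = 0
    · exact zero_case μ τ (fun i hi => Finset.sum_eq_zero_iff.1 h0 i hi) b hb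
    · obtain ⟨m, hm, hτm⟩ : ∃ m ∈ Finset.Icc 1 n, 0 < τ m := by
        by_contra hc
        push_neg at hc
        exact h0 (Finset.sum_eq_zero fun i hi => by have := hc i hi; omega)
      rw [Finset.mem_Icc] at hm
      set τ' : ℕ → ℕ := fun i => τ i - (if i = m then 1 else 0) with hτ'def
      have hμτ : (fun i => μ i + τ i)
          = (fun i => (μ i + τ' i) + (if i = m then 1 else 0)) := by
        funext i
        show μ i + τ i = (μ i + (τ i - (if i = m then 1 else 0))) + (if i = m then 1 else 0)
        by_cases h : i = m
        · subst h
          rw [if_pos rfl]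
          omega
        · rw [if_neg h]
          omega
      rw [hμτ] at hb
      obtain ⟨e, heM, hle, hbe⟩ := strip n (fun i => μ i + τ' i) m hm.1 hm.2 b hb
      have hsum' : ∑ i ∈ Finset.Icc 1 n, τ' i ≤ N := by
        have h1 : (∑ i ∈ Finset.Icc 1 n, τ' i)
            + ∑ i ∈ Finset.Icc 1 n, (if i = m then 1 else 0)
            = ∑ i ∈ Finset.Icc 1 n, τ i := by
          rw [← Finset.sum_add_distrib]
          refine Finset.sum_congr rfl fun i _ => ?_
          show (τ i - (if i = m then 1 else 0)) + (if i = m then 1 else 0) = τ i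
          by_cases h : i = m
          · subst h
            rw [if_pos rfl]
            omega
          · rw [if_neg h]
            omega
        rw [Finset.sum_ite_eq' (Icc 1 n) m (fun _ => 1),
          if_pos (Finset.mem_Icc.2 hm)] at h1
        omega
      obtain ⟨b₁, b₂', hb₁, hb₂', heq⟩ := ih μ τ'
        (fun i hi => by
          show τ i - (if i = m then 1 else 0) = 0
          rw [hτ i hi]
          omega) hsum'
        (fun k i => b k i - e k i) hbe
      refine ⟨b₁, fun k i => b₂' k i + e k i, hb₁, ?_, ?_⟩
      · have hadd := MlaCond_add hb₂' heM
        have hτeq : (fun i => τ' i + (if i = m then 1 else 0)) = τ := by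
          funext i
          show (τ i - (if i = m then 1 else 0)) + (if i = m then 1 else 0) = τ i
          by_cases h : i = m
          · subst h
            rw [if_pos rfl]
            omega
          · rw [if_neg h]
            omega
        rwa [hτeq] at hadd
      · funext k i
        have h : b k i - e k i = b₁ k i + b₂' k i := congrFun (congrFun heq k) i
        have h2 := hle k i
        show b k i = b₁ k i + (b₂' k i + e k i)
        omega

/-- `M(μ+τ) = M(μ)·M(τ)`: identifying monomials with their exponent families
(products become componentwise sums), a family belongs to `M(μ+τ)` iff it is
the sum of a family in `M(μ)` and a family in `M(τ)`. -/
theorem Mla_add (n : ℕ) (hn : 1 ≤ n) (μ τ : ℕ → ℕ)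
    (hμ : ∀ i, ¬(1 ≤ i ∧ i ≤ n) → μ i = 0)
    (hτ : ∀ i, ¬(1 ≤ i ∧ i ≤ n) → τ i = 0) :
    ∀ b : ℕ → ℕ → ℕ,
      MlaCond n (fun i => μ i + τ i) b ↔
        ∃ b₁ b₂ : ℕ → ℕ → ℕ, MlaCond n μ b₁ ∧ MlaCond n τ b₂ ∧
          b = fun k i => b₁ k i + b₂ k i := by
  intro b
  constructor
  · exact forward n (∑ i ∈ Finset.Icc 1 n, τ i) μ τ hτ le_rfl b
  · rintro ⟨b₁, b₂, h1, h2, rfl⟩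
    exact MlaCond_add h1 h2
end

section
/- Let n ≥ 1 and λ = l_1Λ_1+···+l_nΛ_n with l_i ≥ 0, and encode monomials in M(λ) by exponent families (b_k^i) (b_k^i ≥ 0 for 1 ≤ i ≤ n, i ≤ k ≤ n+1) satisfying ∑_{j=i}^{n+1} b_j^i = ∑_{k=i}^n l_k and ∑_{k=0}^{j} b_{i+k}^i ≥ ∑_{k=0}^{j} b_{i+1+k}^{i+1} for 0 ≤ j ≤ n-1, 1 ≤ i ≤ n−max{1,j}. Fix i ∈ {1,…,n}. Form the word over {0,1} obtained by reading, in the order m = 1, 2, …, n (listing for each m the component for k = n+1 down to k = m), b_{i+1}^m many 1's for the component X_{i+1}(-m) and b_i^m many 0's for the component X_i(-m) (ignoring all other components); after cancelling all (0,1) pairs, suppose the leftmost surviving 0 lies in the component X_i(-m_0). Then replacing b_i^{m_0} by b_i^{m_0} − 1 and b_{i+1}^{m_0} by b_{i+1}^{m_0} + 1 yields a family again satisfying all the defining conditions of M(λ). -/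
open Finset List

/-- The tagged `i`-signature word of `(b_k^i)`: reading `m = 1, 2, …, n`
(components `X_{n+1}(-m), …, X_m(-m)`, so within each `m` the `1`s from
`X_{i+1}(-m)` precede the `0`s from `X_i(-m)`), write `b_{i+1}^m` many `1`s
(`true`) and `b_i^m` many `0`s (`false`), each tagged with its component `m`. -/
def sigWord (n i : ℕ) (b : ℕ → ℕ → ℕ) : List (Bool × ℕ) :=
  (List.range n).flatMap fun m' =>
    List.replicate (b (i + 1) (m' + 1)) (true, m' + 1) ++
    List.replicate (b i (m' + 1)) (false, m' + 1)

/-- One cancellation step on tagged words: delete an adjacent `(0,1)`-pair. -/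
def SigStep (u v : List (Bool × ℕ)) : Prop :=
  ∃ (xs ys : List (Bool × ℕ)) (m₁ m₂ : ℕ),
    u = xs ++ (false, m₁) :: (true, m₂) :: ys ∧ v = xs ++ ys

/-- A tagged word is reduced when no cancellation is possible. -/
def SigReduced (u : List (Bool × ℕ)) : Prop := ∀ v, ¬ SigStep u v

/-! The cancellation of `(0,1)`-pairs is computed by a stack machine, so the reduced word does
not depend on the order of cancellations. Reading the signature word block by block, the `1`s
of component `m + 1` first cancel the `0`s of component `m`, which sit on top of the stack; hence
a surviving `0` from `X_i(-m₀)` forces `b_{i+1}^{m₀+1} < b_i^{m₀}`. Moving one box from `X_i(-m₀)`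
to `X_{i+1}(-m₀)` lowers only the partial sum of row `m₀` ending at column `i`, and by one; there
the dominance inequality is strict by the preceding inequality. -/

/-- One step of the stack machine; the stack holds the reduced form of the prefix read so far,
reversed. -/
def sigPush : List (Bool × ℕ) → Bool × ℕ → List (Bool × ℕ)
  | (false, _) :: s, (true, _) => s
  | s, x => x :: s

lemma sigPush_false (s : List (Bool × ℕ)) (m : ℕ) : sigPush s (false, m) = (false, m) :: s := by
  rcases s with _ | ⟨⟨_ | _, _⟩, _⟩ <;> rfl

lemma foldl_sigPush_eq_of_sigStep {u v : List (Bool × ℕ)} (h : SigStep u v)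
    (s : List (Bool × ℕ)) : u.foldl sigPush s = v.foldl sigPush s := by
  obtain ⟨xs, ys, m₁, m₂, rfl, rfl⟩ := h
  simp only [List.foldl_append, List.foldl_cons, sigPush_false]
  rfl

lemma foldl_sigPush_eq_of_reflTransGen {u v : List (Bool × ℕ)}
    (h : Relation.ReflTransGen SigStep u v) : u.foldl sigPush [] = v.foldl sigPush [] := by
  induction h with
  | refl => rfl
  | tail _ hstep ih => rw [ih, foldl_sigPush_eq_of_sigStep hstep]

lemma sigPush_eq_cons_of_sigReduced {s r : List (Bool × ℕ)} {x : Bool × ℕ}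
    (h : SigReduced (s.reverse ++ x :: r)) : sigPush s x = x :: s := by
  rcases s with _ | ⟨⟨_ | _, m₁⟩, s⟩ <;> rcases x with ⟨_ | _, m₂⟩ <;> try rfl
  exact absurd ⟨s.reverse, r, m₁, m₂, by simp, rfl⟩ (h (s.reverse ++ r))

lemma foldl_sigPush_of_sigReduced {r : List (Bool × ℕ)} :
    ∀ s, SigReduced (s.reverse ++ r) → r.foldl sigPush s = r.reverse ++ s := by
  induction r with
  | nil => simp
  | cons x r ih =>
    intro s h
    rw [List.foldl_cons, sigPush_eq_cons_of_sigReduced h, ih (x :: s) (by simpa using h)]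
    simp

lemma foldl_sigPush_replicate_false (m c : ℕ) (s : List (Bool × ℕ)) :
    (List.replicate c (false, m)).foldl sigPush s = List.replicate c (false, m) ++ s := by
  induction c generalizing s with
  | zero => rfl
  | succ c ih =>
    rw [List.replicate_succ, List.foldl_cons, sigPush_false, ih, List.append_cons,
      ← List.replicate_succ', List.replicate_succ]

lemma foldl_sigPush_replicate_true (m a : ℕ) {F T : List (Bool × ℕ)}
    (hF : ∀ x ∈ F, x.1 = false) (hT : ∀ x ∈ T, x.1 = true) :
    ∃ T', (∀ x ∈ T', x.1 = true) ∧
      (List.replicate a (true, m)).foldl sigPush (F ++ T) = F.drop a ++ T' := by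
  induction a generalizing F T with
  | zero => exact ⟨T, hT, rfl⟩
  | succ a ih =>
    rw [List.replicate_succ, List.foldl_cons]
    rcases F with _ | ⟨⟨_ | _, m'⟩, F⟩
    · have hpush : sigPush T (true, m) = (true, m) :: T := by
        rcases T with _ | ⟨⟨_ | _, _⟩, _⟩
        · rfl
        · simp at hT
        · rfl
      obtain ⟨T', hT', h⟩ := ih (F := []) (T := (true, m) :: T) (by simp)
        (by simpa using hT)
      exact ⟨T', hT', by simpa [hpush] using h⟩
    · exact ih (by simpa using hF) hT
    · simp at hF

def zeroStack (i : ℕ) (b : ℕ → ℕ → ℕ) : ℕ → List (Bool × ℕ)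
  | 0 => []
  | M + 1 => List.replicate (b i (M + 1)) (false, M + 1) ++
      (zeroStack i b M).drop (b (i + 1) (M + 1))

section zeroStack

variable {i : ℕ} {b : ℕ → ℕ → ℕ}

lemma mem_zeroStack {M : ℕ} {x : Bool × ℕ} (hx : x ∈ zeroStack i b M) :
    x.1 = false ∧ 1 ≤ x.2 ∧ x.2 ≤ M ∧ 0 < b i x.2 := by
  induction M with
  | zero => simp [zeroStack] at hx
  | succ M ih =>
    rcases List.mem_append.mp hx with hx | hx
    · obtain ⟨hpos, rfl⟩ := List.mem_replicate.mp hx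
      exact ⟨rfl, by omega, le_rfl, Nat.pos_of_ne_zero hpos⟩
    · obtain ⟨h1, h2, h3, h4⟩ := ih (List.mem_of_mem_drop hx)
      exact ⟨h1, h2, by omega, h4⟩

lemma foldl_sigPush_sigWord (M : ℕ) :
    ∃ T, (∀ x ∈ T, x.1 = true) ∧ (sigWord M i b).foldl sigPush [] = zeroStack i b M ++ T := by
  induction M with
  | zero => exact ⟨[], by simp, rfl⟩
  | succ M ih =>
    obtain ⟨T, hT, hfold⟩ := ih
    obtain ⟨T', hT', hones⟩ := foldl_sigPush_replicate_true (M + 1) (b (i + 1) (M + 1))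
      (fun x hx => (mem_zeroStack hx).1) hT
    refine ⟨T', hT', ?_⟩
    simp only [sigWord, List.range_succ, List.flatMap_append, List.flatMap_cons,
      List.flatMap_nil, List.append_nil, List.foldl_append] at hfold ⊢
    rw [hfold, hones, foldl_sigPush_replicate_false, zeroStack, List.append_assoc]

lemma mem_zeroStack_of_sigReduced {n m : ℕ} {r : List (Bool × ℕ)}
    (hr : Relation.ReflTransGen SigStep (sigWord n i b) r) (hred : SigReduced r)
    (hm : (false, m) ∈ r) : (false, m) ∈ zeroStack i b n := by
  obtain ⟨T, hT, hfold⟩ := foldl_sigPush_sigWord (i := i) (b := b) n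
  have hrev : r.reverse = zeroStack i b n ++ T := by
    rw [← hfold, foldl_sigPush_eq_of_reflTransGen hr,
      foldl_sigPush_of_sigReduced [] (by simpa using hred), List.append_nil]
  have hm' : (false, m) ∈ zeroStack i b n ++ T := hrev ▸ List.mem_reverse.mpr hm
  exact (List.mem_append.mp hm').resolve_right fun hmT => by simpa using hT _ hmT

lemma lt_of_mem_zeroStack {M μ : ℕ} (hμ : (false, μ) ∈ zeroStack i b M) (hμM : μ < M) :
    b (i + 1) (μ + 1) < b i μ := by
  induction M with
  | zero => simp [zeroStack] at hμ
  | succ M ih =>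
    rcases List.mem_append.mp hμ with hrep | hdrop
    · obtain ⟨-, hμ_eq⟩ := List.mem_replicate.mp hrep
      simp only [Prod.mk.injEq, true_and] at hμ_eq
      omega
    rcases (Nat.lt_succ_iff.mp hμM).lt_or_eq with hlt | rfl
    · exact ih (List.mem_of_mem_drop hdrop) hlt
    cases μ with
    | zero => simp [zeroStack] at hdrop
    | succ μ =>
      rw [zeroStack, List.drop_append, List.drop_replicate, List.mem_append] at hdrop
      rcases hdrop with hrep | hold
      · have := List.length_pos_of_mem hrep
        simp only [List.length_replicate] at this
        omega
      · have := (mem_zeroStack (List.mem_of_mem_drop (List.mem_of_mem_drop hold))).2.2.1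
        simp at this

end zeroStack

def rowPartialSum (b : ℕ → ℕ → ℕ) (m t : ℕ) : ℕ := ∑ k ∈ Finset.range t, b (m + k) m

lemma sum_range_add_ite_of_shift {f g : ℕ → ℕ} {a : ℕ} (ha : 0 < f a)
    (hg : ∀ k, g k = if k = a then f a - 1 else if k = a + 1 then f (a + 1) + 1 else f k)
    (t : ℕ) :
    ∑ k ∈ Finset.range t, g k + (if t = a + 1 then 1 else 0) = ∑ k ∈ Finset.range t, f k := by
  induction t with
  | zero => simp
  | succ t ih =>
    rw [Finset.sum_range_succ, Finset.sum_range_succ, hg t]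
    split_ifs at ih ⊢ <;> subst_vars <;> omega

def kashiwaraF (i m₀ : ℕ) (b : ℕ → ℕ → ℕ) : ℕ → ℕ → ℕ := fun k m =>
  if k = i ∧ m = m₀ then b i m₀ - 1
  else if k = i + 1 ∧ m = m₀ then b (i + 1) m₀ + 1
  else b k m

section kashiwaraF

variable {n : ℕ} {l : ℕ → ℕ} {b : ℕ → ℕ → ℕ} {i m₀ : ℕ}

lemma rowPartialSum_kashiwaraF (hm₀i : m₀ ≤ i) (hpos : 0 < b i m₀) (m t : ℕ) :
    rowPartialSum (kashiwaraF i m₀ b) m t + (if m = m₀ ∧ t = i + 1 - m₀ then 1 else 0) =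
      rowPartialSum b m t := by
  by_cases hm : m = m₀
  · subst hm
    obtain ⟨c, rfl⟩ : ∃ c, i = m + c := ⟨i - m, by omega⟩
    have key := sum_range_add_ite_of_shift (f := fun k => b (m + k) m)
      (g := fun k => kashiwaraF (m + c) m b (m + k) m) hpos
      (fun k => by simp only [kashiwaraF, and_true, add_assoc, Nat.add_left_cancel_iff]) t
    simpa [rowPartialSum, add_assoc] using key
  · simp [rowPartialSum, kashiwaraF, hm]

lemma sum_Icc_kashiwaraF (hm₀i : m₀ ≤ i) (hpos : 0 < b i m₀) (hi : i ≤ n) (m : ℕ) :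
    ∑ j ∈ Finset.Icc m (n + 1), kashiwaraF i m₀ b j m = ∑ j ∈ Finset.Icc m (n + 1), b j m := by
  have h := rowPartialSum_kashiwaraF hm₀i hpos m (n + 1 + 1 - m)
  rw [if_neg (by omega), add_zero] at h
  simpa only [rowPartialSum, ← Finset.Ico_add_one_right_eq_Icc, Finset.sum_Ico_eq_sum_range]
    using h

lemma MlaCond.rowPartialSum_le (hb : MlaCond n l b) {j m : ℕ} (hj : j ≤ n - 1) (hm : 1 ≤ m)
    (hmn : m ≤ n - max 1 j) : rowPartialSum b (m + 1) (j + 1) ≤ rowPartialSum b m (j + 1) :=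
  hb.2.2 j hj m hm hmn

lemma MlaCond.rowPartialSum_lt (hb : MlaCond n l b) {j : ℕ} (hj : j ≤ n - 1) (hm₀ : 1 ≤ m₀)
    (hm₀n : m₀ ≤ n - max 1 j) (hi : m₀ + j = i) (hstrict : b (i + 1) (m₀ + 1) < b i m₀) :
    rowPartialSum b (m₀ + 1) (j + 1) < rowPartialSum b m₀ (j + 1) := by
  have hprev : rowPartialSum b (m₀ + 1) j ≤ rowPartialSum b m₀ j := by
    rcases j with _ | j
    · rfl
    · exact hb.rowPartialSum_le (by omega) hm₀ (by omega)
  simp only [rowPartialSum, Finset.sum_range_succ] at hprev ⊢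
  rw [add_right_comm, hi]
  omega

theorem MlaCond.kashiwaraF (hb : MlaCond n l b) (hi : i ≤ n)
    (hstrict : b (i + 1) (m₀ + 1) < b i m₀) : MlaCond n l (kashiwaraF i m₀ b) := by
  have hpos : 0 < b i m₀ := by omega
  have hm₀ : 1 ≤ m₀ ∧ m₀ ≤ n ∧ m₀ ≤ i := by
    by_contra h
    have := hb.1 i m₀ (by omega)
    omega
  refine ⟨fun k m hkm => ?_, fun m hm hmn => ?_, fun j hj m hm hmn => ?_⟩
  · unfold _root_.kashiwaraF
    split_ifs with h₁ h₂
    · exact absurd (by omega) hkm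
    · exact absurd (by omega) hkm
    · exact hb.1 k m hkm
  · rw [sum_Icc_kashiwaraF hm₀.2.2 hpos hi, hb.2.1 m hm hmn]
  · change rowPartialSum _ (m + 1) (j + 1) ≤ rowPartialSum _ m (j + 1)
    have hL := (Nat.le_add_right _ _).trans_eq
      (rowPartialSum_kashiwaraF hm₀.2.2 hpos (m + 1) (j + 1))
    have hR := rowPartialSum_kashiwaraF hm₀.2.2 hpos m (j + 1)
    by_cases hcase : m = m₀ ∧ j + 1 = i + 1 - m₀
    · rw [if_pos hcase] at hR
      obtain ⟨rfl, hj'⟩ := hcase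
      have := hb.rowPartialSum_lt hj hm hmn (by omega) hstrict
      omega
    · rw [if_neg hcase, add_zero] at hR
      exact hR ▸ hL.trans (hb.rowPartialSum_le hj hm hmn)

end kashiwaraF

theorem Mla_closed_f_general (n : ℕ) (l : ℕ → ℕ) (b : ℕ → ℕ → ℕ)
    (i : ℕ) (hi2 : i ≤ n) (hb : MlaCond n l b)
    (r : List (Bool × ℕ)) (m₀ : ℕ)
    (hr : Relation.ReflTransGen SigStep (sigWord n i b) r)
    (hred : SigReduced r)
    (hm₀ : ∃ p q : List (Bool × ℕ),
      r = p ++ (false, m₀) :: q ∧ ∀ x ∈ p, x.1 = true) :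
    MlaCond n l (fun k m =>
      if k = i ∧ m = m₀ then b i m₀ - 1
      else if k = i + 1 ∧ m = m₀ then b (i + 1) m₀ + 1
      else b k m) := by
  obtain ⟨p, q, rfl, -⟩ := hm₀
  have hmem := mem_zeroStack_of_sigReduced (m := m₀) hr hred (by simp)
  obtain ⟨-, -, hm₀n, hpos⟩ := mem_zeroStack hmem
  have hstrict : b (i + 1) (m₀ + 1) < b i m₀ := by
    rcases hm₀n.lt_or_eq with hlt | rfl
    · exact lt_of_mem_zeroStack hmem hlt
    · rwa [hb.1 (i + 1) (m₀ + 1) (by omega)]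
  exact hb.kashiwaraF hi2 hstrict

/-- Closure of `M(λ)` under `f̃_i`: if, after cancelling all `(0,1)`-pairs in
the `i`-signature word of `b ∈ M(λ)`, the leftmost surviving `0` is tagged
with component `m₀` (i.e. comes from `X_i(-m₀)`), then the family obtained by
replacing `b_i^{m₀}` with `b_i^{m₀} − 1` and `b_{i+1}^{m₀}` with
`b_{i+1}^{m₀} + 1` again satisfies all the defining conditions of `M(λ)`. -/
theorem Mla_closed_f (n : ℕ) (hn : 1 ≤ n) (l : ℕ → ℕ) (b : ℕ → ℕ → ℕ)
    (i : ℕ) (hi1 : 1 ≤ i) (hi2 : i ≤ n) (hb : MlaCond n l b)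
    (r : List (Bool × ℕ)) (m₀ : ℕ)
    (hr : Relation.ReflTransGen SigStep (sigWord n i b) r)
    (hred : SigReduced r)
    (hm₀ : ∃ p q : List (Bool × ℕ),
      r = p ++ (false, m₀) :: q ∧ ∀ x ∈ p, x.1 = true) :
    MlaCond n l (fun k m =>
      if k = i ∧ m = m₀ then b i m₀ - 1
      else if k = i + 1 ∧ m = m₀ then b (i + 1) m₀ + 1
      else b k m) :=
  Mla_closed_f_general n l b i hi2 hb r m₀ hr hred hm₀
end

section
/- With M(λ) encoded by exponent families (b_k^i) as above and i fixed, if after the signature cancellation the rightmost surviving 1 lies in the component X_{i+1}(-m_0), then replacing b_{i+1}^{m_0} by b_{i+1}^{m_0} − 1 and b_i^{m_0} by b_i^{m_0} + 1 yields a family again satisfying all the defining conditions of M(λ); if no 1 survives, the operator ẽ_i sends the monomial to 0. Hence M(λ) ∪ {0} is closed under ẽ_i. -/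
open Finset List

/-!
The `i`-signature is reduced by the usual stack algorithm: push the letters one by one, a `1`
popping a `0` from the top. Processing the components `m = 1, …, n` in turn, the stack
always has at least `b_i^m` zeros on top, so a `1` of component `m` survives only if
`b_{i+1}^m > b_i^{m-1}`. For the rightmost surviving `1`, of component `m₀`, this strict
inequality is exactly what keeps the dominance between rows `m₀ - 1` and `m₀` valid after one
unit of row `m₀` moves from column `i + 1` to column `i`; all other conditions of `M(λ)` are
untouched or only relaxed by this move.
-/

namespace Signature

def push : List (Bool × ℕ) → Bool × ℕ → List (Bool × ℕ)
  | (false, _) :: s, (true, _) => s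
  | s, c => c :: s

@[simp]
theorem push_false (s : List (Bool × ℕ)) (m : ℕ) : push s (false, m) = (false, m) :: s := by
  rcases s with _ | ⟨⟨_ | _, _⟩, _⟩ <;> rfl

@[simp]
theorem push_cons_false_true (s : List (Bool × ℕ)) (m' m : ℕ) :
    push ((false, m') :: s) (true, m) = s := rfl

theorem foldl_push_eq_of_sigStep {u v : List (Bool × ℕ)} (h : SigStep u v)
    (s : List (Bool × ℕ)) : u.foldl push s = v.foldl push s := by
  obtain ⟨xs, ys, m₁, m₂, rfl, rfl⟩ := h
  simp

theorem foldl_push_eq_of_reflTransGen {u v : List (Bool × ℕ)}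
    (h : Relation.ReflTransGen SigStep u v) (s : List (Bool × ℕ)) :
    u.foldl push s = v.foldl push s := by
  induction h with
  | refl => rfl
  | tail _ hstep ih => exact ih.trans (foldl_push_eq_of_sigStep hstep s)

theorem foldl_push_of_sigReduced {s u : List (Bool × ℕ)} (h : SigReduced (s.reverse ++ u)) :
    u.foldl push s = u.reverse ++ s := by
  induction u generalizing s with
  | nil => simp
  | cons x u ih =>
    have hx : push s x = x :: s := by
      rcases x with ⟨_ | _, m⟩
      · exact push_false s m
      · rcases s with _ | ⟨⟨_ | _, m'⟩, s'⟩
        · rfl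
        · exact (h (s'.reverse ++ u) ⟨s'.reverse, u, m', m, by simp, rfl⟩).elim
        · rfl
    rw [List.foldl_cons, hx, ih (by simpa using h)]
    simp

theorem foldl_push_replicate_false (s : List (Bool × ℕ)) (k m : ℕ) :
    (List.replicate k (false, m)).foldl push s = List.replicate k (false, m) ++ s := by
  induction k generalizing s with
  | zero => simp
  | succ k ih =>
    rw [List.replicate_succ, List.foldl_cons, push_false, ih, ← List.singleton_append,
      ← List.append_assoc, ← List.replicate_succ', List.replicate_succ, List.cons_append]

theorem foldl_push_replicate_true {f t : List (Bool × ℕ)} (hf : ∀ x ∈ f, x.1 = false)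
    (ht : ∀ x ∈ t, x.1 = true) (k m : ℕ) :
    (List.replicate k (true, m)).foldl push (f ++ t)
      = f.drop k ++ (List.replicate (k - f.length) (true, m) ++ t) := by
  induction k generalizing f t with
  | zero => simp
  | succ k ih =>
    rw [List.replicate_succ, List.foldl_cons]
    rcases f with _ | ⟨⟨_ | _, mf⟩, f⟩
    · have hpush : push t (true, m) = (true, m) :: t := by
        rcases t with _ | ⟨⟨_ | _, _⟩, _⟩
        · rfl
        · simp at ht
        · rfl
      rw [List.nil_append, hpush, ← List.nil_append ((true, m) :: t), ih (by simp)]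
      · simp [List.replicate_succ']
      · exact List.forall_mem_cons.2 ⟨rfl, ht⟩
    · rw [List.cons_append, push_cons_false_true, ih (by simpa using hf) ht]
      simp
    · simp at hf

theorem sigWord_succ (N i : ℕ) (b : ℕ → ℕ → ℕ) :
    sigWord (N + 1) i b = sigWord N i b ++
      (List.replicate (b (i + 1) (N + 1)) (true, N + 1) ++
        List.replicate (b i (N + 1)) (false, N + 1)) := by
  simp [sigWord, List.range_succ]

theorem foldl_push_sigWord {i : ℕ} {b : ℕ → ℕ → ℕ} (hb0 : b i 0 = 0) (N : ℕ) :
    ∃ f t, (sigWord N i b).foldl push [] = f ++ t ∧ (∀ x ∈ f, x.1 = false) ∧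
      b i N ≤ f.length ∧ ∀ x ∈ t, x.1 = true ∧ b i (x.2 - 1) < b (i + 1) x.2 := by
  induction N with
  | zero => exact ⟨[], [], rfl, by simp, by simp [hb0], by simp⟩
  | succ N ih =>
    obtain ⟨f, t, hft, hf, hlen, ht⟩ := ih
    refine ⟨List.replicate (b i (N + 1)) (false, N + 1) ++ f.drop (b (i + 1) (N + 1)),
      List.replicate (b (i + 1) (N + 1) - f.length) (true, N + 1) ++ t, ?_, ?_, by simp, ?_⟩
    · rw [sigWord_succ, List.foldl_append, List.foldl_append, hft,
        foldl_push_replicate_true hf (fun x hx => (ht x hx).1), foldl_push_replicate_false]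
      simp
    · intro x hx
      simp only [List.mem_append, List.mem_replicate] at hx
      rcases hx with ⟨-, rfl⟩ | hx
      · rfl
      · exact hf x (List.mem_of_mem_drop hx)
    · intro x hx
      simp only [List.mem_append, List.mem_replicate] at hx
      rcases hx with ⟨hpos, rfl⟩ | hx
      · exact ⟨rfl, by simp; omega⟩
      · exact ht x hx

theorem lt_of_true_mem_of_sigReduced {n i m : ℕ} {b : ℕ → ℕ → ℕ} {r : List (Bool × ℕ)}
    (hb0 : b i 0 = 0) (hr : Relation.ReflTransGen SigStep (sigWord n i b) r)
    (hred : SigReduced r) (hm : (true, m) ∈ r) : b i (m - 1) < b (i + 1) m := by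
  obtain ⟨f, t, hft, hf, -, ht⟩ := foldl_push_sigWord hb0 n
  have hr' : r.reverse = f ++ t := by
    rw [← hft, foldl_push_eq_of_reflTransGen hr, foldl_push_of_sigReduced (by simpa using hred),
      List.append_nil]
  have hmt : (true, m) ∈ f ++ t := hr' ▸ List.mem_reverse.2 hm
  rcases List.mem_append.1 hmt with hmf | hmt
  · simpa using hf _ hmf
  · exact (ht _ hmt).2

end Signature

/-- The exponent family of `ẽ_i` applied to `b`, when the rightmost surviving `1` of the
`i`-signature lies in component `m₀`. -/
def eTilde (i m₀ : ℕ) (b : ℕ → ℕ → ℕ) : ℕ → ℕ → ℕ := fun k m =>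
  if k = i + 1 ∧ m = m₀ then b (i + 1) m₀ - 1
  else if k = i ∧ m = m₀ then b i m₀ + 1
  else b k m

theorem sum_range_of_move_unit {g g' : ℕ → ℕ} {a : ℕ} (hpos : 0 < g (a + 1))
    (ha : g' a = g a + 1) (ha₁ : g' (a + 1) = g (a + 1) - 1)
    (hne : ∀ k, k ≠ a → k ≠ a + 1 → g' k = g k) (t : ℕ) :
    ∑ k ∈ range t, g' k = ∑ k ∈ range t, g k + if t = a + 1 then 1 else 0 := by
  induction t with
  | zero => simp
  | succ t ih =>
    rw [Finset.sum_range_succ, Finset.sum_range_succ, ih]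
    by_cases h₀ : t = a
    · subst h₀; simp [ha]; omega
    by_cases h₁ : t = a + 1
    · subst h₁; simp [ha₁]; omega
    rw [hne t h₀ h₁, if_neg h₁, if_neg (by omega), add_zero, add_zero]

theorem sum_range_eTilde {i m₀ : ℕ} {b : ℕ → ℕ → ℕ} (hle : m₀ ≤ i) (hpos : 0 < b (i + 1) m₀)
    (m t : ℕ) :
    ∑ k ∈ range t, eTilde i m₀ b (m + k) m
      = ∑ k ∈ range t, b (m + k) m + if m = m₀ ∧ t = i + 1 - m₀ then 1 else 0 := by
  by_cases hm : m = m₀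
  · subst hm
    rw [sum_range_of_move_unit (a := i - m) (g := fun k => b (m + k) m) _ _ _ _ t]
    · simp [show i - m + 1 = i + 1 - m by omega]
    · simpa [show m + (i - m + 1) = i + 1 by omega] using hpos
    · simp [eTilde, show m + (i - m) = i by omega]
    · simp [eTilde, show m + (i - m + 1) = i + 1 by omega]
    · intro k h₀ h₁
      simp only [eTilde]
      rw [if_neg (by omega), if_neg (by omega)]
  · simp [eTilde, hm]

namespace MlaCond

variable {n : ℕ} {l : ℕ → ℕ} {b : ℕ → ℕ → ℕ} {i m₀ : ℕ}

theorem bounds_of_pos (hb : MlaCond n l b) {k m : ℕ} (h : 0 < b k m) :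
    1 ≤ m ∧ m ≤ n ∧ m ≤ k ∧ k ≤ n + 1 := by
  by_contra h'
  exact h.ne' (hb.1 k m h')

theorem le_of_apply_sub_one_lt (hb : MlaCond n l b) (hi : 1 ≤ i)
    (hlt : b i (m₀ - 1) < b (i + 1) m₀) : m₀ ≤ i := by
  obtain ⟨-, hm₀n, hm₀, -⟩ := hb.bounds_of_pos (Nat.zero_lt_of_lt hlt)
  by_contra h
  obtain rfl : m₀ = i + 1 := by omega
  have hdom := hb.2.2 0 (by omega) i hi (by simp; omega)
  simp only [zero_add, Finset.range_one, Finset.sum_singleton, add_zero, add_tsub_cancel_right]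
    at hdom hlt
  omega

theorem sum_range_lt_of_lt (hb : MlaCond n l b) {i' : ℕ} (hi' : 1 ≤ i') (hle : i' + 1 ≤ i)
    (hin : i ≤ n) (hlt : b i i' < b (i + 1) (i' + 1)) :
    ∑ k ∈ range (i - i'), b (i' + 1 + k) (i' + 1) < ∑ k ∈ range (i - i'), b (i' + k) i' := by
  have hdom := hb.2.2 (i - i') (by omega) i' hi' (by rw [max_eq_right (by omega)]; omega)
  rw [Finset.sum_range_succ, Finset.sum_range_succ, show i' + 1 + (i - i') = i + 1 by omega,
    show i' + (i - i') = i by omega] at hdom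
  omega

theorem eTilde (hb : MlaCond n l b) (hi : 1 ≤ i) (hlt : b i (m₀ - 1) < b (i + 1) m₀) :
    MlaCond n l (eTilde i m₀ b) := by
  have hpos : 0 < b (i + 1) m₀ := Nat.zero_lt_of_lt hlt
  obtain ⟨hm₀, hm₀n, -, hin⟩ := hb.bounds_of_pos hpos
  have hle := hb.le_of_apply_sub_one_lt hi hlt
  have hsum := sum_range_eTilde hle hpos
  refine ⟨?support, ?rows, ?dominance⟩
  case support =>
    intro k m hkm
    simp only [_root_.eTilde]
    split_ifs with h₁ h₂
    · exact absurd (by omega) hkm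
    · exact absurd (by omega) hkm
    · exact hb.1 k m hkm
  case rows =>
    intro m hm hmn
    have hIcc (f : ℕ → ℕ) : ∑ j ∈ Icc m (n + 1), f j = ∑ k ∈ range (n + 1 + 1 - m), f (m + k) := by
      rw [← Ico_add_one_right_eq_Icc, sum_Ico_eq_sum_range]
    rw [← hb.2.1 m hm hmn, hIcc, hIcc, hsum, if_neg (by omega), add_zero]
  case dominance =>
    intro j hj i' hi' hi'n
    have hdom := hb.2.2 j hj i' hi' hi'n
    rw [hsum, hsum]
    by_cases hcrit : i' + 1 = m₀ ∧ j + 1 = i + 1 - m₀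
    · have hstrict := hb.sum_range_lt_of_lt (i := i) hi' (by omega) (by omega)
        (by rw [← hcrit.1] at hlt; simpa using hlt)
      rw [if_pos hcrit, if_neg (by omega), show i - i' = j + 1 by omega] at *
      omega
    · rw [if_neg hcrit]
      split_ifs <;> omega

end MlaCond

theorem Mla_closed_e_general (n : ℕ) (l : ℕ → ℕ) (b : ℕ → ℕ → ℕ)
    (i : ℕ) (hi1 : 1 ≤ i) (hb : MlaCond n l b)
    (r : List (Bool × ℕ)) (m₀ : ℕ)
    (hr : Relation.ReflTransGen SigStep (sigWord n i b) r)
    (hred : SigReduced r)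
    (hm₀ : ∃ p q : List (Bool × ℕ),
      r = p ++ (true, m₀) :: q ∧ ∀ x ∈ q, x.1 = false) :
    MlaCond n l (fun k m =>
      if k = i + 1 ∧ m = m₀ then b (i + 1) m₀ - 1
      else if k = i ∧ m = m₀ then b i m₀ + 1
      else b k m) := by
  obtain ⟨p, q, rfl, -⟩ := hm₀
  have hb0 : b i 0 = 0 := hb.1 i 0 (by omega)
  exact hb.eTilde hi1 (Signature.lt_of_true_mem_of_sigReduced hb0 hr hred (by simp))

/-- Closure of `M(λ)` under `ẽ_i`: if, after cancelling all `(0,1)`-pairs in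
the `i`-signature word of `b ∈ M(λ)`, the rightmost surviving `1` is tagged
with component `m₀` (i.e. comes from `X_{i+1}(-m₀)`), then the family obtained
by replacing `b_{i+1}^{m₀}` with `b_{i+1}^{m₀} − 1` and `b_i^{m₀}` with
`b_i^{m₀} + 1` again satisfies all the defining conditions of `M(λ)`.
(If no `1` survives, `ẽ_i` sends the monomial to `0` by definition; hence
`M(λ) ∪ {0}` is closed under `ẽ_i`.) -/
theorem Mla_closed_e (n : ℕ) (hn : 1 ≤ n) (l : ℕ → ℕ) (b : ℕ → ℕ → ℕ)
    (i : ℕ) (hi1 : 1 ≤ i) (hi2 : i ≤ n) (hb : MlaCond n l b)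
    (r : List (Bool × ℕ)) (m₀ : ℕ)
    (hr : Relation.ReflTransGen SigStep (sigWord n i b) r)
    (hred : SigReduced r)
    (hm₀ : ∃ p q : List (Bool × ℕ),
      r = p ++ (true, m₀) :: q ∧ ∀ x ∈ q, x.1 = false) :
    MlaCond n l (fun k m =>
      if k = i + 1 ∧ m = m₀ then b (i + 1) m₀ - 1
      else if k = i ∧ m = m₀ then b i m₀ + 1
      else b k m) :=
  Mla_closed_e_general n l b i hi1 hb r m₀ hr hred hm₀
end

section
/- Let T be a marginally large semistandard tableau for A_n (n rows; for each 1 ≤ i ≤ n the number of i-entries in row i exceeds the total number of boxes in row i+1 by exactly one, with row n+1 interpreted as empty). Encode T by the counts b_j^i of j-entries in row i for i < j ≤ n+1. Then the shape of T is determined by the b_j^i: row i of T has exactly 1 + ∑_{r=i+1}^{n} (1 + ∑_{k=r+1}^{n+1} b_k^r) + ∑_{k=i+1}^{n+1} b_k^i boxes, and the map from marginally large tableaux to arbitrary families (b_j^i) of nonnegative integers (1 ≤ i ≤ n, i < j ≤ n+1) is a bijection. -/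
open Finset

/-- `T` (with row lengths `L`) is a marginally large semistandard tableau for
`A_n`: `n` nonempty rows forming a Young diagram, entries of row `i` lie in
`{i, …, n+1}`, rows weakly increase, columns strictly increase, and for each
`1 ≤ i ≤ n` the number of `i`-entries in row `i` exceeds the total number of
boxes of row `i+1` by exactly one (row `n+1` being empty). Everything is
normalized to `0` outside the diagram. -/
def IsMarginallyLarge (n : ℕ) (L : ℕ → ℕ) (T : ℕ → ℕ → ℕ) : Prop :=
  (∀ i, ¬(1 ≤ i ∧ i ≤ n) → L i = 0) ∧
  (∀ i j, ¬(1 ≤ i ∧ i ≤ n ∧ j < L i) → T i j = 0) ∧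
  (∀ i, 1 ≤ i → i ≤ n → 1 ≤ L i) ∧
  (∀ i, 1 ≤ i → i < n → L (i + 1) ≤ L i) ∧
  (∀ i j, 1 ≤ i → i ≤ n → j < L i → i ≤ T i j ∧ T i j ≤ n + 1) ∧
  (∀ i j, 1 ≤ i → i ≤ n → j + 1 < L i → T i j ≤ T i (j + 1)) ∧
  (∀ i j, 1 ≤ i → i < n → j < L (i + 1) → T i j < T (i + 1) j) ∧
  (∀ i, 1 ≤ i → i ≤ n →
    ((Finset.range (L i)).filter (fun j => T i j = i)).card = L (i + 1) + 1)

/-- The number of `j`-entries in row `i` of `T`. -/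
def entryCount (L : ℕ → ℕ) (T : ℕ → ℕ → ℕ) (j i : ℕ) : ℕ :=
  ((Finset.range (L i)).filter (fun c => T i c = j)).card

/-!
Counting the entries of row `i` of a marginally large tableau gives
`L i = L (i + 1) + 1 + ∑ₖ b k i`: the `i`-entries number `L (i + 1) + 1` and the others are
prescribed. Since `L (n + 1) = 0`, this recursion determines the shape. A weakly increasing row
is determined by its multiplicities, its `c`-th entry being the least `j` such that more than `c`
entries are `≤ j`. Conversely, filling every row in this way gives a marginally large tableau:
columns are strict because the first `L (i + 1) + 1` entries of row `i` equal `i`, while every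
entry of row `i + 1` exceeds `i`.
-/

theorem le_iff_lt_card_filter_le {α : Type*} [Preorder α] [DecidableLE α] {f : ℕ → α} {m c : ℕ}
    (hf : MonotoneOn f (Set.Iio m)) (hc : c < m) (a : α) :
    f c ≤ a ↔ c < #{c' ∈ range m | f c' ≤ a} := by
  constructor
  · intro h
    have hsub : range (c + 1) ⊆ {c' ∈ range m | f c' ≤ a} := fun c' hc' => by
      simp only [mem_range] at hc'
      simp only [mem_filter, mem_range]
      exact ⟨by omega, (hf (Set.mem_Iio.2 (by omega)) hc (by omega)).trans h⟩
    simpa using card_le_card hsub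
  · intro h
    by_contra h'
    have hsub : {c' ∈ range m | f c' ≤ a} ⊆ range c := fun c' hc' => by
      simp only [mem_filter, mem_range] at hc' ⊢
      by_contra hle
      exact h' ((hf hc hc'.1 (by omega)).trans hc'.2)
    have := card_le_card hsub
    rw [card_range] at this
    omega

namespace MarginallyLarge

variable (n : ℕ) (b : ℕ → ℕ → ℕ)

def offDiagonalSum (i : ℕ) : ℕ := ∑ k ∈ Icc (i + 1) (n + 1), b k i

def rowLength (i : ℕ) : ℕ :=
  if 1 ≤ i ∧ i ≤ n then
    1 + ∑ r ∈ Icc (i + 1) n, (1 + offDiagonalSum n b r) + offDiagonalSum n b i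
  else 0

def mult (i j : ℕ) : ℕ :=
  if j = i then rowLength n b (i + 1) + 1 else if j ≤ n + 1 then b j i else 0

def cumMult (i j : ℕ) : ℕ := ∑ v ∈ Icc i j, mult n b i v

noncomputable def tableau (i c : ℕ) : ℕ :=
  if 1 ≤ i ∧ i ≤ n ∧ c < rowLength n b i then sInf {j | c < cumMult n b i j} else 0

def HasOffDiagonalCounts (L : ℕ → ℕ) (T : ℕ → ℕ → ℕ) : Prop :=
  ∀ i j, 1 ≤ i → i ≤ n → i < j → j ≤ n + 1 → entryCount L T j i = b j i

variable {n b} {i j c : ℕ}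

theorem rowLength_of_not (h : ¬(1 ≤ i ∧ i ≤ n)) : rowLength n b i = 0 := if_neg h

theorem rowLength_eq_succ_add (h1 : 1 ≤ i) (h2 : i ≤ n) :
    rowLength n b i = rowLength n b (i + 1) + 1 + offDiagonalSum n b i := by
  rcases h2.eq_or_lt with rfl | h2
  · simp [rowLength, h1, add_comm]
  · rw [rowLength, if_pos ⟨h1, h2.le⟩, rowLength, if_pos ⟨by omega, h2⟩,
      ← add_sum_Ioc_eq_sum_Icc h2, ← Icc_add_one_left_eq_Ioc]
    ring

theorem cumMult_of_lt (h : j < i) : cumMult n b i j = 0 := by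
  rw [cumMult, Icc_eq_empty (by omega), sum_empty]

theorem cumMult_self : cumMult n b i i = rowLength n b (i + 1) + 1 := by
  simp [cumMult, mult]

theorem cumMult_mono : Monotone (cumMult n b i) := fun _ _ h =>
  sum_le_sum_of_subset (Icc_subset_Icc_right h)

theorem cumMult_succ (h : i ≤ j + 1) :
    cumMult n b i (j + 1) = cumMult n b i j + mult n b i (j + 1) :=
  sum_Icc_succ_top h _

theorem cumMult_top (h1 : 1 ≤ i) (h2 : i ≤ n) : cumMult n b i (n + 1) = rowLength n b i := by
  rw [cumMult, ← add_sum_Ioc_eq_sum_Icc (by omega), ← Icc_add_one_left_eq_Ioc,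
    rowLength_eq_succ_add h1 h2, offDiagonalSum, mult, if_pos rfl]
  congr 1
  refine sum_congr rfl fun v hv => ?_
  rw [mem_Icc] at hv
  rw [mult, if_neg (by omega), if_pos hv.2]

theorem cumMult_le_rowLength (h1 : 1 ≤ i) (h2 : i ≤ n) (j : ℕ) :
    cumMult n b i j ≤ rowLength n b i := by
  rw [← cumMult_top h1 h2]
  refine sum_le_sum_of_ne_zero fun v hv hne => ?_
  rw [mem_Icc] at hv ⊢
  refine ⟨hv.1, ?_⟩
  unfold mult at hne
  split_ifs at hne <;> omega

theorem tableau_le_iff (h1 : 1 ≤ i) (h2 : i ≤ n) (hc : c < rowLength n b i) (j : ℕ) :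
    tableau n b i c ≤ j ↔ c < cumMult n b i j := by
  rw [tableau, if_pos ⟨h1, h2, hc⟩]
  have hne : {j | c < cumMult n b i j}.Nonempty := ⟨n + 1, by simpa [cumMult_top h1 h2]⟩
  exact ⟨fun h => (Nat.sInf_mem hne).trans_le (cumMult_mono h), fun h => Nat.sInf_le h⟩

theorem le_tableau (h1 : 1 ≤ i) (h2 : i ≤ n) (hc : c < rowLength n b i) :
    i ≤ tableau n b i c := by
  by_contra h
  have := (tableau_le_iff h1 h2 hc (i - 1)).1 (by omega)
  rw [cumMult_of_lt (by omega)] at this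
  omega

theorem tableau_le (h1 : 1 ≤ i) (h2 : i ≤ n) (hc : c < rowLength n b i) :
    tableau n b i c ≤ n + 1 := by
  rw [tableau_le_iff h1 h2 hc, cumMult_top h1 h2]
  exact hc

theorem tableau_eq_self (h1 : 1 ≤ i) (h2 : i ≤ n) (hc : c < rowLength n b (i + 1) + 1) :
    tableau n b i c = i := by
  have hc' : c < rowLength n b i := by rw [rowLength_eq_succ_add h1 h2]; omega
  refine le_antisymm ?_ (le_tableau h1 h2 hc')
  rwa [tableau_le_iff h1 h2 hc', cumMult_self]

theorem tableau_mono (h1 : 1 ≤ i) (h2 : i ≤ n) (hc : c + 1 < rowLength n b i) :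
    tableau n b i c ≤ tableau n b i (c + 1) := by
  rw [tableau_le_iff h1 h2 (by omega)]
  have := (tableau_le_iff h1 h2 hc (tableau n b i (c + 1))).1 le_rfl
  omega

theorem filter_tableau_eq (h1 : 1 ≤ i) (h2 : i ≤ n) :
    {c ∈ range (rowLength n b i) | tableau n b i c = j + 1}
      = Ico (cumMult n b i j) (cumMult n b i (j + 1)) := by
  ext c
  rw [mem_filter, mem_range, mem_Ico]
  constructor
  · rintro ⟨hc, he⟩
    have hle := tableau_le_iff h1 h2 hc (j + 1)
    have hlt := tableau_le_iff h1 h2 hc j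
    omega
  · rintro ⟨hlo, hhi⟩
    have hc := hhi.trans_le (cumMult_le_rowLength h1 h2 _)
    have hle := tableau_le_iff h1 h2 hc (j + 1)
    have hlt := tableau_le_iff h1 h2 hc j
    omega

theorem entryCount_tableau (h1 : 1 ≤ i) (h2 : i ≤ n) (hj : i ≤ j) :
    entryCount (rowLength n b) (tableau n b) j i = mult n b i j := by
  obtain ⟨j, rfl⟩ : ∃ k, j = k + 1 := ⟨j - 1, by omega⟩
  rw [entryCount, filter_tableau_eq h1 h2, Nat.card_Ico, cumMult_succ hj]
  omega

theorem isMarginallyLarge_tableau : IsMarginallyLarge n (rowLength n b) (tableau n b) := by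
  refine ⟨fun i h => rowLength_of_not h, fun i c h => if_neg h, ?_, ?_,
    fun i c h1 h2 hc => ⟨le_tableau h1 h2 hc, tableau_le h1 h2 hc⟩,
    fun i c h1 h2 hc => tableau_mono h1 h2 hc, ?_, ?_⟩
  · intro i h1 h2
    rw [rowLength_eq_succ_add h1 h2]
    omega
  · intro i h1 h2
    rw [rowLength_eq_succ_add h1 h2.le]
    omega
  · intro i c h1 h2 hc
    rw [tableau_eq_self h1 h2.le (by omega)]
    exact le_tableau (by omega) h2 hc
  · intro i h1 h2
    have := entryCount_tableau (b := b) h1 h2 le_rfl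
    rwa [mult, if_pos rfl] at this

theorem hasOffDiagonalCounts_tableau : HasOffDiagonalCounts n b (rowLength n b) (tableau n b) :=
  fun i j h1 h2 hij hj => by
    rw [entryCount_tableau h1 h2 hij.le, mult, if_neg hij.ne', if_pos hj]

end MarginallyLarge

namespace IsMarginallyLarge

open MarginallyLarge

variable {n : ℕ} {b : ℕ → ℕ → ℕ} {L : ℕ → ℕ} {T : ℕ → ℕ → ℕ} {i c : ℕ}

theorem length_eq_zero (hml : IsMarginallyLarge n L T) (h : ¬(1 ≤ i ∧ i ≤ n)) : L i = 0 :=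
  hml.1 i h

theorem entry_eq_zero (hml : IsMarginallyLarge n L T) (h : ¬(1 ≤ i ∧ i ≤ n ∧ c < L i)) :
    T i c = 0 :=
  hml.2.1 i c h

theorem entry_mem_Icc (hml : IsMarginallyLarge n L T) (h1 : 1 ≤ i) (h2 : i ≤ n) (hc : c < L i) :
    T i c ∈ Icc i (n + 1) :=
  mem_Icc.2 (hml.2.2.2.2.1 i c h1 h2 hc)

theorem entryCount_self (hml : IsMarginallyLarge n L T) (h1 : 1 ≤ i) (h2 : i ≤ n) :
    entryCount L T i i = L (i + 1) + 1 :=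
  hml.2.2.2.2.2.2.2 i h1 h2

theorem monotoneOn_row (hml : IsMarginallyLarge n L T) (h1 : 1 ≤ i) (h2 : i ≤ n) :
    MonotoneOn (T i) (Set.Iio (L i)) :=
  monotoneOn_of_le_add_one Set.ordConnected_Iio fun c _ _ hc => hml.2.2.2.2.2.1 i c h1 h2 hc

theorem sum_entryCount (hml : IsMarginallyLarge n L T) (h1 : 1 ≤ i) (h2 : i ≤ n) :
    ∑ v ∈ Icc i (n + 1), entryCount L T v i = L i := by
  have := card_eq_sum_card_fiberwise (f := T i) (t := Icc i (n + 1))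
    fun c hc => hml.entry_mem_Icc h1 h2 (mem_range.1 hc)
  rw [card_range] at this
  exact this.symm

theorem length_eq_succ_add (hml : IsMarginallyLarge n L T) (hcnt : HasOffDiagonalCounts n b L T)
    (h1 : 1 ≤ i) (h2 : i ≤ n) : L i = L (i + 1) + 1 + offDiagonalSum n b i := by
  rw [← hml.sum_entryCount h1 h2, ← add_sum_Ioc_eq_sum_Icc (by omega),
    ← Icc_add_one_left_eq_Ioc, hml.entryCount_self h1 h2, offDiagonalSum]
  congr 1
  exact sum_congr rfl fun v hv => hcnt i v h1 h2 (mem_Icc.1 hv).1 (mem_Icc.1 hv).2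

theorem eq_rowLength (hml : IsMarginallyLarge n L T) (hcnt : HasOffDiagonalCounts n b L T) :
    L = rowLength n b := by
  funext i
  rcases lt_or_ge (n + 1) i with hi | hi
  · rw [hml.length_eq_zero (by omega), rowLength_of_not (by omega)]
  induction hi using Nat.decreasingInduction with
  | self => rw [hml.length_eq_zero (by omega), rowLength_of_not (by omega)]
  | of_succ k hk ih =>
    rcases Nat.eq_zero_or_pos k with rfl | hk0
    · rw [hml.length_eq_zero (by omega), rowLength_of_not (by omega)]
    · rw [hml.length_eq_succ_add hcnt hk0 (by omega), rowLength_eq_succ_add hk0 (by omega), ih]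

theorem entryCount_eq_mult (hml : IsMarginallyLarge n L T) (hcnt : HasOffDiagonalCounts n b L T)
    (h1 : 1 ≤ i) (h2 : i ≤ n) {v : ℕ} (hv : i ≤ v) : entryCount L T v i = mult n b i v := by
  rcases hv.eq_or_lt with rfl | hv
  · rw [hml.entryCount_self h1 h2, mult, if_pos rfl, hml.eq_rowLength hcnt]
  by_cases hvn : v ≤ n + 1
  · rw [hcnt i v h1 h2 hv hvn, mult, if_neg hv.ne', if_pos hvn]
  · rw [mult, if_neg hv.ne', if_neg hvn, entryCount, card_eq_zero, filter_eq_empty_iff]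
    intro c hc
    have := (mem_Icc.1 (hml.entry_mem_Icc h1 h2 (mem_range.1 hc))).2
    omega

theorem card_filter_le (hml : IsMarginallyLarge n L T) (hcnt : HasOffDiagonalCounts n b L T)
    (h1 : 1 ≤ i) (h2 : i ≤ n) (j : ℕ) : #{c ∈ range (L i) | T i c ≤ j} = cumMult n b i j := by
  rw [card_eq_sum_card_fiberwise (f := T i) (t := Icc i j) fun c hc => by
    simp only [coe_filter, Set.mem_ofPred_eq, mem_range] at hc
    exact mem_Icc.2 ⟨(mem_Icc.1 (hml.entry_mem_Icc h1 h2 hc.1)).1, hc.2⟩]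
  refine sum_congr rfl fun v hv => ?_
  rw [mem_Icc] at hv
  rw [← hml.entryCount_eq_mult hcnt h1 h2 hv.1, entryCount, filter_filter]
  congr 1
  exact filter_congr fun c _ => ⟨And.right, fun h => ⟨h ▸ hv.2, h⟩⟩

theorem le_iff_lt_cumMult (hml : IsMarginallyLarge n L T) (hcnt : HasOffDiagonalCounts n b L T)
    (h1 : 1 ≤ i) (h2 : i ≤ n) (hc : c < L i) (j : ℕ) :
    T i c ≤ j ↔ c < cumMult n b i j := by
  rw [← hml.card_filter_le hcnt h1 h2]
  exact le_iff_lt_card_filter_le (hml.monotoneOn_row h1 h2) hc j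

theorem eq_tableau (hml : IsMarginallyLarge n L T) (hcnt : HasOffDiagonalCounts n b L T) :
    T = tableau n b := by
  funext i c
  by_cases h : 1 ≤ i ∧ i ≤ n ∧ c < L i
  · obtain ⟨h1, h2, hc⟩ := h
    have hc' : c < rowLength n b i := hml.eq_rowLength hcnt ▸ hc
    exact eq_of_forall_ge_iff fun j => by
      rw [hml.le_iff_lt_cumMult hcnt h1 h2 hc, tableau_le_iff h1 h2 hc']
  · rw [hml.entry_eq_zero h, tableau, if_neg (hml.eq_rowLength hcnt ▸ h)]

end IsMarginallyLarge

open MarginallyLarge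

theorem marginally_large_bij_general (n : ℕ) (b : ℕ → ℕ → ℕ) :
    (∃! LT : (ℕ → ℕ) × (ℕ → ℕ → ℕ),
      IsMarginallyLarge n LT.1 LT.2 ∧
      ∀ i j, 1 ≤ i → i ≤ n → i < j → j ≤ n + 1 →
        entryCount LT.1 LT.2 j i = b j i) ∧
    (∀ L T, IsMarginallyLarge n L T →
      (∀ i j, 1 ≤ i → i ≤ n → i < j → j ≤ n + 1 →
        entryCount L T j i = b j i) →
      ∀ i, 1 ≤ i → i ≤ n →
        L i = 1 + (∑ r ∈ Finset.Icc (i + 1) n,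
            (1 + ∑ k ∈ Finset.Icc (r + 1) (n + 1), b k r))
          + ∑ k ∈ Finset.Icc (i + 1) (n + 1), b k i) := by
  refine ⟨⟨(rowLength n b, tableau n b),
    ⟨isMarginallyLarge_tableau, hasOffDiagonalCounts_tableau⟩, ?_⟩, ?_⟩
  · rintro ⟨L, T⟩ ⟨hml, hcnt⟩
    exact Prod.ext (hml.eq_rowLength hcnt) (hml.eq_tableau hcnt)
  · intro L T hml hcnt i h1 h2
    rw [hml.eq_rowLength hcnt, rowLength, if_pos ⟨h1, h2⟩]
    rfl

/-- Marginally large tableaux are in bijection with arbitrary families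
`(b_j^i)` of nonnegative integers (`1 ≤ i ≤ n`, `i < j ≤ n+1`), via the counts
of non-diagonal entries; moreover the shape is determined:
row `i` has exactly
`1 + ∑_{r=i+1}^{n} (1 + ∑_{k=r+1}^{n+1} b_k^r) + ∑_{k=i+1}^{n+1} b_k^i` boxes. -/
theorem marginally_large_bij (n : ℕ) (hn : 1 ≤ n) (b : ℕ → ℕ → ℕ)
    (hb : ∀ j i, ¬(1 ≤ i ∧ i ≤ n ∧ i < j ∧ j ≤ n + 1) → b j i = 0) :
    (∃! LT : (ℕ → ℕ) × (ℕ → ℕ → ℕ),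
      IsMarginallyLarge n LT.1 LT.2 ∧
      ∀ i j, 1 ≤ i → i ≤ n → i < j → j ≤ n + 1 →
        entryCount LT.1 LT.2 j i = b j i) ∧
    (∀ L T, IsMarginallyLarge n L T →
      (∀ i j, 1 ≤ i → i ≤ n → i < j → j ≤ n + 1 →
        entryCount L T j i = b j i) →
      ∀ i, 1 ≤ i → i ≤ n →
        L i = 1 + (∑ r ∈ Finset.Icc (i + 1) n,
            (1 + ∑ k ∈ Finset.Icc (r + 1) (n + 1), b k r))
          + ∑ k ∈ Finset.Icc (i + 1) (n + 1), b k i) :=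
  marginally_large_bij_general n b
end

section
/- Define the weight of a marginally large tableau T (encoded by counts b_k^i of k-entries in row i, i < k ≤ n+1) by wt(T) = −∑_{j=1}^n ( ∑_{r=1}^{j} ∑_{k=j+1}^{n+1} b_k^r ) α_j. Define the weight of the corresponding monomial M = ∏_{i=1}^n ( X_i(-i)^{(n-i+1, -∑_{k=i+1}^{n+1} b_k^i)} ∏_{k=i+1}^{n+1} X_k(-i)^{(0, b_k^i)} ) as wt(M) = ∑_i (∑_m y_i^1(m)) Λ_i, where y_i^1(m) is the second component of the exponent of Y_i(m) in M after expanding the X's into Y's. Then wt(M) = wt(T), using Λ-coordinates via α_j = −Λ_{j-1} + 2Λ_j − Λ_{j+1} (Λ_0 = Λ_{n+1} = 0). -/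
open Finset

/-- Extended Nakajima monomials, written additively: finitely supported
`ℤ × ℤ`-valued exponent functions on the symbols `Y_i(m)`. `Ypair n i m v` is
`Y_i(m)^v` (the identity for `i` out of range, convention `Y_0 = Y_{n+1} = 1`). -/
noncomputable def Ypair (n i : ℕ) (m : ℤ) (v : ℤ × ℤ) : (ℕ × ℤ) →₀ ℤ × ℤ :=
  if 1 ≤ i ∧ i ≤ n then Finsupp.single (i, m) v else 0

/-- `X_k(m)^{(u,v)} = Y_k(m)^{(u,v)} · Y_{k-1}(m+1)^{(-u,-v)}`. -/
noncomputable def Xpair (n k : ℕ) (m : ℤ) (v : ℤ × ℤ) : (ℕ × ℤ) →₀ ℤ × ℤ :=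
  Ypair n k m v + Ypair n (k - 1) (m + 1) (-v)

/-- The monomial of `M(∞)` attached to the family `(b_k^i)`:
`M = ∏_{i=1}^n ( X_i(-i)^{(n-i+1, -∑_{k=i+1}^{n+1} b_k^i)}
∏_{k=i+1}^{n+1} X_k(-i)^{(0, b_k^i)} )`. -/
noncomputable def Minf (n : ℕ) (b : ℕ → ℕ → ℕ) : (ℕ × ℤ) →₀ ℤ × ℤ :=
  ∑ i ∈ Finset.Icc 1 n,
    (Xpair n i (-(i : ℤ))
        ((n : ℤ) - i + 1, -∑ k ∈ Finset.Icc (i + 1) (n + 1), (b k i : ℤ))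
      + ∑ k ∈ Finset.Icc (i + 1) (n + 1), Xpair n k (-(i : ℤ)) (0, (b k i : ℤ)))

/-- `wt(M) = ∑_i (∑_m y_i^1(m)) Λ_i`: the coefficient of `Λ_i` is the sum of
the second components of the exponents of the `Y_i(·)` appearing in `M`. -/
noncomputable def wtM (n : ℕ) (b : ℕ → ℕ → ℕ) (i : ℕ) : ℤ :=
  ∑ p ∈ (Minf n b).support.filter (fun p => p.1 = i), ((Minf n b) p).2

/-- The `α_j`-coefficients of `−wt(T)`:
`c_j = ∑_{r=1}^{j} ∑_{k=j+1}^{n+1} b_k^r` (so `c_0 = c_{n+1} = 0`). -/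
def wtTc (n : ℕ) (b : ℕ → ℕ → ℕ) (j : ℕ) : ℤ :=
  ∑ r ∈ Finset.Icc 1 j, ∑ k ∈ Finset.Icc (j + 1) (n + 1), (b k r : ℤ)

noncomputable def phi (i : ℕ) : ((ℕ × ℤ) →₀ ℤ × ℤ) →+ ℤ :=
  Finsupp.liftAddHom fun p => if p.1 = i then AddMonoidHom.snd ℤ ℤ else 0

lemma phi_single (i : ℕ) (p : ℕ × ℤ) (v : ℤ × ℤ) :
    phi i (Finsupp.single p v) = if p.1 = i then v.2 else 0 := by
  simp only [phi, Finsupp.liftAddHom_apply_single]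
  split <;> simp

lemma wtM_eq_phi (n : ℕ) (b : ℕ → ℕ → ℕ) (i : ℕ) :
    wtM n b i = phi i (Minf n b) := by
  rw [wtM, Finset.sum_filter, phi, Finsupp.liftAddHom_apply, Finsupp.sum]
  refine Finset.sum_congr rfl fun p _ => ?_
  split <;> simp_all

lemma phi_Ypair (n i j : ℕ) (m : ℤ) (v : ℤ × ℤ) (hi1 : 1 ≤ i) (hi2 : i ≤ n) :
    phi i (Ypair n j m v) = if j = i then v.2 else 0 := by
  unfold Ypair
  split
  · exact phi_single i (j, m) v
  · rw [map_zero, if_neg (by omega)]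

lemma phi_Xpair (n i k : ℕ) (m : ℤ) (v : ℤ × ℤ) (hi1 : 1 ≤ i) (hi2 : i ≤ n) :
    phi i (Xpair n k m v)
      = (if k = i then v.2 else 0) + (if k = i + 1 then -v.2 else 0) := by
  rw [Xpair, map_add, phi_Ypair n i k m v hi1 hi2, phi_Ypair n i (k-1) _ _ hi1 hi2]
  congr 1
  have h : (k - 1 = i) ↔ (k = i + 1) := by omega
  by_cases hk : k = i + 1
  · rw [if_pos (h.mpr hk), if_pos hk]; rfl
  · rw [if_neg (fun hh => hk (h.mp hh)), if_neg hk]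

lemma sum_if_const {s : Finset ℕ} (c : Prop) [Decidable c] (f : ℕ → ℤ) :
    (∑ k ∈ s, if c then f k else 0) = if c then ∑ k ∈ s, f k else 0 := by
  split <;> simp

def bigE (n : ℕ) (b : ℕ → ℕ → ℕ) (i r k : ℕ) : ℤ :=
  if 1 ≤ r ∧ r ≤ n ∧ r + 1 ≤ k ∧ k ≤ n + 1 then
    ((if r = i then -(b k r : ℤ) else 0) + (if r = i + 1 then (b k r : ℤ) else 0))
      + ((if k = i then (b k r : ℤ) else 0) + (if k = i + 1 then -(b k r : ℤ) else 0))
  else 0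

lemma wtM_eq_big (n : ℕ) (b : ℕ → ℕ → ℕ) (i : ℕ) (hi1 : 1 ≤ i) (hi2 : i ≤ n) :
    wtM n b i = ∑ r ∈ Finset.Icc 1 (n + 1), ∑ k ∈ Finset.Icc 1 (n + 1), bigE n b i r k := by
  rw [wtM_eq_phi, Minf, map_sum]
  simp only [map_add, map_sum, phi_Xpair n i _ _ _ hi1 hi2]
  rw [← Finset.sum_subset (Finset.Icc_subset_Icc_right (Nat.le_succ n))
      (fun x hx hx' => Finset.sum_eq_zero fun k _ => by
        rw [Finset.mem_Icc] at hx; rw [Finset.mem_Icc] at hx'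
        rw [bigE, if_neg (by omega)])]
  refine Finset.sum_congr rfl fun r hr => ?_
  rw [Finset.mem_Icc] at hr
  have hset : Finset.Icc (r + 1) (n + 1)
      = (Finset.Icc 1 (n + 1)).filter (fun k => 1 ≤ r ∧ r ≤ n ∧ r + 1 ≤ k ∧ k ≤ n + 1) := by
    ext x; simp only [Finset.mem_filter, Finset.mem_Icc]; omega
  have : ∑ k ∈ Finset.Icc 1 (n + 1), bigE n b i r k
      = ∑ k ∈ Finset.Icc (r + 1) (n + 1),
          (((if r = i then -(b k r : ℤ) else 0) + (if r = i + 1 then (b k r : ℤ) else 0))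
            + ((if k = i then (b k r : ℤ) else 0) + (if k = i + 1 then -(b k r : ℤ) else 0))) := by
    rw [hset, Finset.sum_filter]
    refine Finset.sum_congr rfl fun k hk => ?_
    rw [Finset.mem_Icc] at hk
    rw [bigE]
  rw [this]
  simp only [Finset.sum_add_distrib, sum_if_const, Finset.sum_neg_distrib, neg_neg]

lemma wtTc_big (n : ℕ) (b : ℕ → ℕ → ℕ) (j : ℕ) (hj : j ≤ n + 1) :
    wtTc n b j = ∑ r ∈ Finset.Icc 1 (n + 1), ∑ k ∈ Finset.Icc 1 (n + 1),
      (if 1 ≤ r ∧ r ≤ j ∧ j + 1 ≤ k ∧ k ≤ n + 1 then (b k r : ℤ) else 0) := by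
  have h1 : ∑ r ∈ Finset.Icc 1 (n + 1), ∑ k ∈ Finset.Icc 1 (n + 1),
      (if 1 ≤ r ∧ r ≤ j ∧ j + 1 ≤ k ∧ k ≤ n + 1 then (b k r : ℤ) else 0)
      = ∑ r ∈ Finset.Icc 1 j, ∑ k ∈ Finset.Icc 1 (n + 1),
        (if 1 ≤ r ∧ r ≤ j ∧ j + 1 ≤ k ∧ k ≤ n + 1 then (b k r : ℤ) else 0) :=
    (Finset.sum_subset (Finset.Icc_subset_Icc_right hj)
      (fun r hr hr' => Finset.sum_eq_zero fun k _ => by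
        rw [Finset.mem_Icc] at hr; rw [Finset.mem_Icc] at hr'
        rw [if_neg (by omega)])).symm
  rw [wtTc, h1]
  refine Finset.sum_congr rfl fun r hr => ?_
  rw [Finset.mem_Icc] at hr
  have h2 : ∑ k ∈ Finset.Icc 1 (n + 1),
      (if 1 ≤ r ∧ r ≤ j ∧ j + 1 ≤ k ∧ k ≤ n + 1 then (b k r : ℤ) else 0)
      = ∑ k ∈ Finset.Icc (j + 1) (n + 1),
        (if 1 ≤ r ∧ r ≤ j ∧ j + 1 ≤ k ∧ k ≤ n + 1 then (b k r : ℤ) else 0) :=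
    (Finset.sum_subset (Finset.Icc_subset_Icc (by omega) le_rfl)
      (fun k hk hk' => by
        rw [Finset.mem_Icc] at hk; rw [Finset.mem_Icc] at hk'
        rw [if_neg (by omega)])).symm
  rw [h2]
  refine Finset.sum_congr rfl fun k hk => ?_
  rw [Finset.mem_Icc] at hk
  rw [if_pos (by omega)]

/-- `wt(M) = wt(T)`: with `wt(T) = −∑_j c_j α_j` and
`α_j = −Λ_{j-1} + 2Λ_j − Λ_{j+1}` (`Λ_0 = Λ_{n+1} = 0`), the coefficient of
`Λ_i` in `wt(T)` is `c_{i-1} + c_{i+1} − 2c_i`, and it equals the `Λ_i`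
coefficient of `wt(M)` for every `1 ≤ i ≤ n`. -/
theorem wtM_eq_wtT (n : ℕ) (hn : 1 ≤ n) (b : ℕ → ℕ → ℕ)
    (hb : ∀ k i, ¬(1 ≤ i ∧ i ≤ n ∧ i < k ∧ k ≤ n + 1) → b k i = 0) :
    ∀ i, 1 ≤ i → i ≤ n →
      wtM n b i = wtTc n b (i - 1) + wtTc n b (i + 1) - 2 * wtTc n b i := by
  intro i hi1 hi2
  rw [wtM_eq_big n b i hi1 hi2, wtTc_big n b (i - 1) (by omega),
    wtTc_big n b (i + 1) (by omega), wtTc_big n b i (by omega)]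
  simp only [Finset.mul_sum, ← Finset.sum_add_distrib, ← Finset.sum_sub_distrib]
  refine Finset.sum_congr rfl fun r hr => Finset.sum_congr rfl fun k hk => ?_
  rw [Finset.mem_Icc] at hr
  rw [Finset.mem_Icc] at hk
  rw [bigE]
  split_ifs <;> omega
end

section
/- Let n ≥ 1, let p_1,…,p_n be positive integers and r ∈ ℤ. The map (b_k^i) ↦ ∏_{i=1}^n ( X_i(r−i)^{(∑_{k=i}^{n} p_k, −∑_{k=i+1}^{n+1} b_k^i)} ∏_{k=i+1}^{n+1} X_k(r−i)^{(0, b_k^i)} ), defined on families of nonnegative integers b_k^i (1 ≤ i ≤ n, i < k ≤ n+1), gives a bijection from such families onto the set M(p_1,…,p_n; r; ∞), and in particular M(p_1,…,p_n; r; ∞) is in weight-preserving-up-to-shift bijection with M(1,…,1; 0; ∞) = M(∞). -/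
open Finset

/-- The `X`-form monomial attached to a family `(b_k^i)`:
`∏_{i=1}^n ( X_i(r−i)^{(∑_{k=i}^{n} p_k, −∑_{k=i+1}^{n+1} b_k^i)}
∏_{k=i+1}^{n+1} X_k(r−i)^{(0, b_k^i)} )`. -/
noncomputable def XformP (n : ℕ) (p : ℕ → ℕ) (r : ℤ) (b : ℕ → ℕ → ℕ) :
    (ℕ × ℤ) →₀ ℤ × ℤ :=
  ∑ i ∈ Finset.Icc 1 n,
    (Xpair n i (r - i)
        (∑ k ∈ Finset.Icc i n, (p k : ℤ),
          -∑ k ∈ Finset.Icc (i + 1) (n + 1), (b k i : ℤ))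
      + ∑ k ∈ Finset.Icc (i + 1) (n + 1), Xpair n k (r - i) (0, (b k i : ℤ)))

/-- The `Y`-form monomial of Definition 4.9:
`∏_{i=1}^n ( Y_i(r−i)^{(p_i, a_i^i)} ∏_{m=0}^{i-1} Y_i(r−m)^{(0, a_i^m)} )`. -/
noncomputable def Yform (n : ℕ) (p : ℕ → ℕ) (r : ℤ) (a : ℕ → ℕ → ℤ) :
    (ℕ × ℤ) →₀ ℤ × ℤ :=
  ∑ i ∈ Finset.Icc 1 n,
    (Ypair n i (r - i) ((p i : ℤ), a i i)
      + ∑ m ∈ Finset.range i, Ypair n i (r - m) (0, a i m))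

/-- The defining conditions on the exponents `a_i^m` of `M(p_1,…,p_n; r; ∞)`:
`∑_{j=0}^k a_{i+j}^j ≤ 0` for `0 ≤ k ≤ n−1`, `1 ≤ i ≤ n−k`, and
`∑_{i=1}^{n−k} ∑_{j=0}^k a_{i+j}^j = ∑_{i=k+1}^n a_i^i` for `0 ≤ k ≤ n−1`. -/
def ACond (n : ℕ) (a : ℕ → ℕ → ℤ) : Prop :=
  (∀ k, k ≤ n - 1 → ∀ i, 1 ≤ i → i ≤ n - k →
    ∑ j ∈ Finset.range (k + 1), a (i + j) j ≤ 0) ∧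
  (∀ k, k ≤ n - 1 →
    ∑ i ∈ Finset.Icc 1 (n - k), ∑ j ∈ Finset.range (k + 1), a (i + j) j
      = ∑ i ∈ Finset.Icc (k + 1) n, a i i)

/-- The set `M(p_1,…,p_n; r; ∞)` of extended Nakajima monomials. -/
noncomputable def MsetInf (n : ℕ) (p : ℕ → ℕ) (r : ℤ) :
    Set ((ℕ × ℤ) →₀ ℤ × ℤ) :=
  {M | ∃ a : ℕ → ℕ → ℤ, ACond n a ∧ M = Yform n p r a}

namespace NakAux

/-- `B_i = ∑_{k=i+1}^{n+1} b_k^i`. -/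
def Bc (n : ℕ) (b : ℕ → ℕ → ℕ) (i : ℕ) : ℤ :=
  ∑ k ∈ Finset.Icc (i+1) (n+1), (b k i : ℤ)

/-- `P_i = ∑_{k=i}^{n} p_k`. -/
def Pc (n : ℕ) (p : ℕ → ℕ) (i : ℕ) : ℤ := ∑ k ∈ Finset.Icc i n, (p k : ℤ)

/-- The exponents `a_j^m` attached to a family `b`. -/
def Adef (n : ℕ) (b : ℕ → ℕ → ℕ) (j m : ℕ) : ℤ :=
  if m = j then Bc n b (j+1) - Bc n b j else (b j m : ℤ) - b (j+1) (m+1)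

/-- Candidate inverse family. -/
def bdef (n : ℕ) (a : ℕ → ℕ → ℤ) (k i : ℕ) : ℕ :=
  if 1 ≤ i ∧ i < k ∧ k ≤ n+1 then (-∑ j ∈ Finset.range i, a (k-i+j) j).toNat else 0

lemma Ypair_zero (n i : ℕ) (m : ℤ) : Ypair n i m 0 = 0 := by
  simp [Ypair]

lemma Ypair_add (n i : ℕ) (m : ℤ) (u v : ℤ × ℤ) :
    Ypair n i m u + Ypair n i m v = Ypair n i m (u + v) := by
  unfold Ypair; split_ifs <;> simp

lemma Ypair_idx0 (n : ℕ) (m : ℤ) (v : ℤ × ℤ) : Ypair n 0 m v = 0 := by simp [Ypair]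

lemma Ypair_big (n i : ℕ) (h : n < i) (m : ℤ) (v : ℤ × ℤ) : Ypair n i m v = 0 := by
  unfold Ypair; rw [if_neg (by omega)]

lemma sum_Icc_range {M : Type*} [AddCommMonoid M] (f : ℕ → M) (a b : ℕ) :
    ∑ i ∈ Finset.Icc a b, f i = ∑ i ∈ Finset.range (b+1-a), f (a+i) := by
  rw [← Finset.Ico_add_one_right_eq_Icc, Finset.sum_Ico_eq_sum_range]

lemma sum_Icc_bot {M : Type*} [AddCommMonoid M] (f : ℕ → M) {a b : ℕ} (h : a ≤ b) :
    ∑ i ∈ Finset.Icc a b, f i = f a + ∑ i ∈ Finset.Icc (a+1) b, f i := by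
  rw [← Finset.Ico_add_one_right_eq_Icc, ← Finset.Ico_add_one_right_eq_Icc, Finset.sum_eq_sum_Ico_succ_bot (by omega)]

lemma sum_range_shift {M : Type*} [SubtractionCommMonoid M] (g : ℕ → M) (n : ℕ)
    (h0 : g 0 = 0) (hn : g n = 0) :
    ∑ i ∈ Finset.range n, g (1 + i) = ∑ i ∈ Finset.range n, g i := by
  have e : ∑ i ∈ Finset.range n, g (1 + i) = ∑ i ∈ Finset.range n, g (i + 1) :=
    Finset.sum_congr rfl (fun i _ => by rw [add_comm])
  have h3 : (∑ i ∈ Finset.range n, g (i+1)) + g 0 = (∑ i ∈ Finset.range n, g i) + g n :=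
    (Finset.sum_range_succ' g n).symm.trans (Finset.sum_range_succ g n)
  rw [h0, hn, add_zero, add_zero] at h3
  rw [e, h3]

lemma sum_tri {M : Type*} [AddCommMonoid M] (n : ℕ) (f : ℕ → ℕ → M) :
    ∑ j ∈ Finset.Icc 1 n, ∑ m ∈ Finset.range j, f j m
      = ∑ m ∈ Finset.range n, ∑ j ∈ Finset.Icc (m+1) n, f j m := by
  induction n with
  | zero => simp
  | succ n ih =>
    rw [Finset.sum_Icc_succ_top (by omega), ih,
      Finset.sum_range_succ (fun m => ∑ j ∈ Finset.Icc (m+1) (n+1), f j m) n]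
    have h1 : ∀ m ∈ Finset.range n, ∑ j ∈ Finset.Icc (m+1) (n+1), f j m
        = (∑ j ∈ Finset.Icc (m+1) n, f j m) + f (n+1) m := fun m hm =>
      Finset.sum_Icc_succ_top (by simp at hm; omega) _
    rw [Finset.sum_congr rfl h1, Finset.sum_add_distrib, Finset.sum_range_succ]
    have h2 : ∑ j ∈ Finset.Icc (n+1) (n+1), f j n = f (n+1) n := by simp
    rw [h2]
    abel


lemma Pc_Bc_top (n : ℕ) (p : ℕ → ℕ) (b : ℕ → ℕ → ℕ) :
    Pc n p (n+1) = 0 ∧ Bc n b (n+1) = 0 := by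
  constructor
  · rw [Pc, Finset.Icc_eq_empty (by omega), Finset.sum_empty]
  · rw [Bc, Finset.Icc_eq_empty (by omega), Finset.sum_empty]

lemma key1 (n : ℕ) (p : ℕ → ℕ) (r : ℤ) (b : ℕ → ℕ → ℕ)
    (hb0 : ∀ k, b k 0 = 0) :
    XformP n p r b = Yform n p r (Adef n b) := by
  have hstep1 : XformP n p r b =
      (∑ i ∈ Finset.Icc 1 n, Ypair n i (r - i) (Pc n p i, -Bc n b i))
      + (∑ i ∈ Finset.Icc 1 n, Ypair n (i-1) (r - i + 1) (-(Pc n p i, -Bc n b i)))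
      + ((∑ i ∈ Finset.Icc 1 n, ∑ k ∈ Finset.Icc (i+1) (n+1),
            Ypair n k (r - i) (0, (b k i : ℤ)))
      + (∑ i ∈ Finset.Icc 1 n, ∑ k ∈ Finset.Icc (i+1) (n+1),
            Ypair n (k-1) (r - i + 1) (-(0, (b k i : ℤ)) : ℤ × ℤ))) := by
    simp only [XformP, Xpair, Pc, Bc, Finset.sum_add_distrib]
  have hstep2 : Yform n p r (Adef n b) =
      (∑ i ∈ Finset.Icc 1 n, Ypair n i (r - i) ((p i : ℤ), Adef n b i i))
      + ∑ i ∈ Finset.Icc 1 n, ∑ m ∈ Finset.range i, Ypair n i (r - m) (0, Adef n b i m) := by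
    simp only [Yform, Finset.sum_add_distrib]
  set g : ℕ → ((ℕ × ℤ) →₀ ℤ × ℤ) :=
    fun j => Ypair n j (r - j) (-(Pc n p (j+1), -Bc n b (j+1))) with hg
  have hshift : (∑ i ∈ Finset.Icc 1 n, Ypair n (i-1) (r - i + 1) (-(Pc n p i, -Bc n b i)))
      = ∑ i ∈ Finset.Icc 1 n, g i := by
    rw [sum_Icc_range (fun i => Ypair n (i-1) (r - i + 1) (-(Pc n p i, -Bc n b i))) 1 n,
        sum_Icc_range g 1 n]
    simp only [Nat.add_sub_cancel]
    have hL : ∀ i ∈ Finset.range n,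
        Ypair n ((1+i)-1) (r - (1+i : ℕ) + 1) (-(Pc n p (1+i), -Bc n b (1+i))) = g i := by
      intro i _
      have e1 : (1+i) - 1 = i := by omega
      have e2 : r - ((1+i : ℕ) : ℤ) + 1 = r - (i : ℤ) := by push_cast; ring
      have e3 : 1 + i = i + 1 := by omega
      rw [e1, e2, e3, hg]
    rw [Finset.sum_congr rfl hL]
    exact (sum_range_shift g n (by simp [hg, Ypair_idx0]) (by
      rw [hg]
      simp only [(Pc_Bc_top n p b).1, (Pc_Bc_top n p b).2]
      rw [show (-((0:ℤ), -(0:ℤ)) : ℤ × ℤ) = 0 by simp, Ypair_zero])).symm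
  have hdiag : (∑ i ∈ Finset.Icc 1 n, Ypair n i (r - i) (Pc n p i, -Bc n b i))
      + (∑ i ∈ Finset.Icc 1 n, Ypair n (i-1) (r - i + 1) (-(Pc n p i, -Bc n b i)))
      = ∑ i ∈ Finset.Icc 1 n, Ypair n i (r - i) ((p i : ℤ), Adef n b i i) := by
    rw [hshift, ← Finset.sum_add_distrib]
    refine Finset.sum_congr rfl fun i hi => ?_
    rw [Finset.mem_Icc] at hi
    rw [hg, Ypair_add]
    have hv : ((Pc n p i, -Bc n b i) + -(Pc n p (i+1), -Bc n b (i+1)) : ℤ × ℤ)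
        = ((p i : ℤ), Adef n b i i) := by
      have hP : Pc n p i = (p i : ℤ) + Pc n p (i+1) := by
        rw [Pc, Pc, sum_Icc_bot (fun k => (p k : ℤ)) hi.2]
      rw [Adef, if_pos rfl, Prod.neg_mk, Prod.mk_add_mk, hP]
      rw [Prod.mk.injEq]
      constructor <;> ring
    rw [hv]
  have hoff : (∑ i ∈ Finset.Icc 1 n, ∑ k ∈ Finset.Icc (i+1) (n+1),
        Ypair n k (r - i) (0, (b k i : ℤ)))
      + (∑ i ∈ Finset.Icc 1 n, ∑ k ∈ Finset.Icc (i+1) (n+1),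
        Ypair n (k-1) (r - i + 1) (-(0, (b k i : ℤ)) : ℤ × ℤ))
      = ∑ i ∈ Finset.Icc 1 n, ∑ m ∈ Finset.range i, Ypair n i (r - m) (0, Adef n b i m) := by
    have hRHS : ∑ i ∈ Finset.Icc 1 n, ∑ m ∈ Finset.range i, Ypair n i (r - m) (0, Adef n b i m)
        = (∑ m ∈ Finset.range n, ∑ j ∈ Finset.Icc (m+1) n, Ypair n j (r - m) (0, (b j m : ℤ)))
        + (∑ m ∈ Finset.range n, ∑ j ∈ Finset.Icc (m+1) n,
            Ypair n j (r - m) (-(0, (b (j+1) (m+1) : ℤ)) : ℤ × ℤ)) := by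
      rw [sum_tri n (fun j m => Ypair n j (r - (m:ℕ)) (0, Adef n b j m)),
        ← Finset.sum_add_distrib]
      refine Finset.sum_congr rfl fun m hm => ?_
      rw [← Finset.sum_add_distrib]
      refine Finset.sum_congr rfl fun j hj => ?_
      rw [Finset.mem_Icc] at hj
      rw [Ypair_add, Adef, if_neg (by omega)]
      congr 1
    have hS3 : (∑ i ∈ Finset.Icc 1 n, ∑ k ∈ Finset.Icc (i+1) (n+1),
          Ypair n k (r - i) (0, (b k i : ℤ)))
        = ∑ m ∈ Finset.range n, ∑ j ∈ Finset.Icc (m+1) n, Ypair n j (r - m) (0, (b j m : ℤ)) := by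
      set F : ℕ → ((ℕ × ℤ) →₀ ℤ × ℤ) :=
        fun m => ∑ k ∈ Finset.Icc (m+1) n, Ypair n k (r - m) (0, (b k m : ℤ)) with hF
      have h1 : ∀ i ∈ Finset.Icc 1 n,
          ∑ k ∈ Finset.Icc (i+1) (n+1), Ypair n k (r - i) (0, (b k i : ℤ)) = F i := by
        intro i hi
        rw [Finset.mem_Icc] at hi
        rw [Finset.sum_Icc_succ_top (by omega), Ypair_big n (n+1) (by omega), add_zero, hF]
      rw [Finset.sum_congr rfl h1, sum_Icc_range F 1 n]
      simp only [Nat.add_sub_cancel]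
      refine sum_range_shift F n ?_ ?_
      · rw [hF]
        refine Finset.sum_eq_zero fun k _ => ?_
        rw [hb0 k, show ((0:ℤ), ((0:ℕ):ℤ)) = (0 : ℤ × ℤ) by simp, Ypair_zero]
      · rw [hF]
        simp only
        rw [Finset.Icc_eq_empty (by omega), Finset.sum_empty]
    have hS4 : (∑ i ∈ Finset.Icc 1 n, ∑ k ∈ Finset.Icc (i+1) (n+1),
          Ypair n (k-1) (r - i + 1) (-(0, (b k i : ℤ)) : ℤ × ℤ))
        = ∑ m ∈ Finset.range n, ∑ j ∈ Finset.Icc (m+1) n,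
            Ypair n j (r - m) (-(0, (b (j+1) (m+1) : ℤ)) : ℤ × ℤ) := by
      rw [sum_Icc_range (fun i => ∑ k ∈ Finset.Icc (i+1) (n+1),
            Ypair n (k-1) (r - i + 1) (-(0, (b k i : ℤ)) : ℤ × ℤ)) 1 n]
      simp only [Nat.add_sub_cancel]
      refine Finset.sum_congr rfl fun s hs => ?_
      rw [sum_Icc_range (fun k => Ypair n (k-1) (r - (1+s:ℕ) + 1)
            (-(0, (b k (1+s) : ℤ)) : ℤ × ℤ)) (1+s+1) (n+1),
          sum_Icc_range (fun j => Ypair n j (r - s)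
            (-(0, (b (j+1) (s+1) : ℤ)) : ℤ × ℤ)) (s+1) n]
      have esz : (n+1)+1-(1+s+1) = n+1-(s+1) := by omega
      rw [esz]
      refine Finset.sum_congr rfl fun t ht => ?_
      have e1 : 1+s+1+t-1 = s+1+t := by omega
      have e2 : r - ((1+s : ℕ) : ℤ) + 1 = r - (s : ℤ) := by push_cast; ring
      have e3 : 1+s+1+t = s+1+t+1 := by omega
      have e4 : 1+s = s+1 := by omega
      rw [e1, e2, e3, e4]
    rw [hS3, hS4, hRHS]
  rw [hstep1, hstep2, hdiag, hoff]
lemma key2 (n : ℕ) (hn : 1 ≤ n) (b : ℕ → ℕ → ℕ) (hb0 : ∀ k, b k 0 = 0) :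
    ACond n (Adef n b) := by
  have htel : ∀ k i, 1 ≤ i → ∑ j ∈ Finset.range (k+1), Adef n b (i+j) j
      = -(b (i+k+1) (k+1) : ℤ) := by
    intro k i hi
    have h1 : ∀ j ∈ Finset.range (k+1), Adef n b (i+j) j
        = ((b (i+j) j : ℤ) - (b (i+(j+1)) (j+1) : ℤ)) := by
      intro j _
      rw [Adef, if_neg (by omega), show i+j+1 = i+(j+1) from by omega]
    rw [Finset.sum_congr rfl h1, Finset.sum_range_sub' (fun j => (b (i+j) j : ℤ)) (k+1)]
    rw [show i+0 = i from by omega, hb0 i, show i+(k+1) = i+k+1 from by omega]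
    push_cast
    ring
  constructor
  · intro k hk i hi hik
    rw [htel k i hi]
    omega
  · intro k hk
    have hL : ∀ i ∈ Finset.Icc 1 (n-k), ∑ j ∈ Finset.range (k+1), Adef n b (i+j) j
        = -(b (i+k+1) (k+1) : ℤ) := fun i hi => htel k i (Finset.mem_Icc.mp hi).1
    rw [Finset.sum_congr rfl hL]
    have h2 : ∀ i ∈ Finset.Icc (k+1) n, Adef n b i i = Bc n b (i+1) - Bc n b i :=
      fun i _ => by rw [Adef, if_pos rfl]
    rw [Finset.sum_congr rfl h2, sum_Icc_range (fun i => Bc n b (i+1) - Bc n b i) (k+1) n,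
        sum_Icc_range (fun i => -(b (i+k+1) (k+1) : ℤ)) 1 (n-k)]
    have e1 : n - k + 1 - 1 = n - k := by omega
    have e2 : n + 1 - (k+1) = n - k := by omega
    rw [e1, e2]
    have h3 : ∀ s ∈ Finset.range (n-k), Bc n b (k+1+s+1) - Bc n b (k+1+s)
        = Bc n b (k+1+(s+1)) - Bc n b (k+1+s) := by
      intro s _
      rw [show k+1+s+1 = k+1+(s+1) by omega]
    rw [Finset.sum_congr rfl h3, Finset.sum_range_sub (fun s => Bc n b (k+1+s)) (n-k)]
    have e3 : Bc n b (k+1+(n-k)) = 0 := by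
      rw [show k+1+(n-k) = n+1 by omega, Bc, Finset.Icc_eq_empty (by omega), Finset.sum_empty]
    rw [e3, zero_sub, Bc, sum_Icc_range (fun k' => (b k' (k+1) : ℤ)) (k+2) (n+1)]
    rw [show n+1+1-(k+2) = n - k by omega, ← Finset.sum_neg_distrib]
    refine Finset.sum_congr rfl fun s _ => ?_
    rw [show 1+s+k+1 = k+2+s by omega]

lemma Ypair_apply (n i : ℕ) (m : ℤ) (v : ℤ × ℤ) (q : ℕ × ℤ) :
    Ypair n i m v q = if ((i, m) = q ∧ 1 ≤ i ∧ i ≤ n) then v else 0 := by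
  by_cases h : 1 ≤ i ∧ i ≤ n
  · rw [Ypair, if_pos h, Finsupp.single_apply]
    by_cases h2 : (i, m) = q
    · rw [if_pos h2, if_pos ⟨h2, h⟩]
    · rw [if_neg h2, if_neg (fun hc => h2 hc.1)]
  · rw [Ypair, if_neg h, if_neg (fun hc => h hc.2)]
    rfl

lemma Yform_apply (n : ℕ) (p : ℕ → ℕ) (r : ℤ) (a : ℕ → ℕ → ℤ)
    (j m : ℕ) (hj1 : 1 ≤ j) (hjn : j ≤ n) (hm : m ≤ j) :
    Yform n p r a (j, r - (m : ℤ)) = if m = j then ((p j : ℤ), a j j) else (0, a j m) := by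
  rw [Yform, Finsupp.finset_sum_apply]
  rw [Finset.sum_eq_single_of_mem j (Finset.mem_Icc.mpr ⟨hj1, hjn⟩)]
  · rw [Finsupp.add_apply, Finsupp.finset_sum_apply, Ypair_apply]
    by_cases hmj : m = j
    · subst hmj
      rw [if_pos ⟨rfl, hj1, hjn⟩, if_pos rfl]
      have hz : ∀ m' ∈ Finset.range m, Ypair n m (r - (m' : ℕ)) (0, a m m') (m, r - (m : ℤ)) = 0 := by
        intro m' hm'
        rw [Finset.mem_range] at hm'
        rw [Ypair_apply, if_neg]
        rintro ⟨hc, -⟩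
        rw [Prod.mk.injEq] at hc
        have : (m' : ℤ) = (m : ℤ) := by linarith [hc.2]
        omega
      rw [Finset.sum_eq_zero hz, add_zero]
    · rw [if_neg (by
        rintro ⟨hc, -⟩
        rw [Prod.mk.injEq] at hc
        have : (j : ℤ) = (m : ℤ) := by linarith [hc.2]
        omega), if_neg hmj, zero_add]
      have hmlt : m < j := by omega
      rw [Finset.sum_eq_single_of_mem m (Finset.mem_range.mpr hmlt)]
      · rw [Ypair_apply, if_pos ⟨rfl, hj1, hjn⟩]
      · intro m' hm' hne
        rw [Ypair_apply, if_neg]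
        rintro ⟨hc, -⟩
        rw [Prod.mk.injEq] at hc
        have : (m' : ℤ) = (m : ℤ) := by linarith [hc.2]
        omega
  · intro i hi hne
    rw [Finsupp.add_apply, Finsupp.finset_sum_apply, Ypair_apply, if_neg (by
      rintro ⟨hc, -⟩
      rw [Prod.mk.injEq] at hc
      exact hne hc.1), zero_add]
    refine Finset.sum_eq_zero fun m' _ => ?_
    rw [Ypair_apply, if_neg]
    rintro ⟨hc, -⟩
    rw [Prod.mk.injEq] at hc
    exact hne hc.1

lemma Yform_congr (n : ℕ) (p : ℕ → ℕ) (r : ℤ) (a a' : ℕ → ℕ → ℤ)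
    (h : ∀ j m, 1 ≤ j → j ≤ n → m ≤ j → a j m = a' j m) :
    Yform n p r a = Yform n p r a' := by
  unfold Yform
  refine Finset.sum_congr rfl fun i hi => ?_
  rw [Finset.mem_Icc] at hi
  congr 1
  · rw [h i i hi.1 hi.2 le_rfl]
  · exact Finset.sum_congr rfl fun m hm =>
      by rw [h i m hi.1 hi.2 (le_of_lt (Finset.mem_range.mp hm))]

lemma brec (n : ℕ) (b : ℕ → ℕ → ℕ)
    (hb : ∀ k i, ¬(1 ≤ i ∧ i ≤ n ∧ i < k ∧ k ≤ n + 1) → b k i = 0) :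
    ∀ i k, 1 ≤ i → i < k → k ≤ n+1 →
      (b k i : ℤ) = -∑ j ∈ Finset.range i, Adef n b (k-i+j) j := by
  intro i
  induction i with
  | zero => omega
  | succ i ih =>
    intro k hi hik hk
    rcases Nat.eq_zero_or_pos i with hi0 | hipos
    · subst hi0
      rw [Finset.sum_range_one, Adef, if_neg (by omega),
        show k-(0+1)+0+1 = k from by omega, show k-(0+1)+0 = k-1 from by omega,
        hb (k-1) 0 (by omega)]
      simp
    · rw [Finset.sum_range_succ, Adef, if_neg (by omega)]
      have h1 := ih (k-1) hipos (by omega) (by omega)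
      have e1 : ∀ j, k-1-i+j = k-(i+1)+j := by intro j; omega
      rw [Finset.sum_congr rfl (fun j _ => by rw [e1 j])] at h1
      have e2 : k-(i+1)+i = k-1 := by omega
      have e3 : k-1+1 = k := by omega
      rw [e2, e3, neg_add, ← h1]
      ring

lemma bdef_nonpos (n : ℕ) (a : ℕ → ℕ → ℤ) (ha : ACond n a) :
    ∀ k i, 1 ≤ i → i < k → k ≤ n+1 → ∑ j ∈ Finset.range i, a (k-i+j) j ≤ 0 := by
  intro k i hi hik hk
  have h := ha.1 (i-1) (by omega) (k-i) (by omega) (by omega)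
  rw [show i-1+1 = i from by omega] at h
  exact h

lemma bdef_val (n : ℕ) (a : ℕ → ℕ → ℤ) (ha : ACond n a) :
    ∀ k i, i < k → k ≤ n+1 →
      (bdef n a k i : ℤ) = -∑ j ∈ Finset.range i, a (k-i+j) j := by
  intro k i hik hk
  rcases Nat.eq_zero_or_pos i with hi0 | hipos
  · subst hi0
    rw [bdef, if_neg (by omega), Finset.range_zero, Finset.sum_empty]
    simp
  · rw [bdef, if_pos ⟨hipos, hik, hk⟩]
    exact Int.toNat_of_nonneg (by linarith [bdef_nonpos n a ha k i hipos hik hk])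

lemma Bc_bdef (n : ℕ) (hn : 1 ≤ n) (a : ℕ → ℕ → ℤ) (ha : ACond n a) :
    ∀ j, 1 ≤ j → j ≤ n+1 → Bc n (bdef n a) j = -∑ i ∈ Finset.Icc j n, a i i := by
  intro j hj1 hj
  rcases Nat.lt_or_ge n j with hnj | hjn
  · rw [Bc, Finset.Icc_eq_empty (by omega), Finset.sum_empty,
      Finset.Icc_eq_empty (by omega), Finset.sum_empty, neg_zero]
  · have hA := ha.2 (j-1) (by omega)
    rw [show j-1+1 = j from by omega, show n-(j-1) = n+1-j from by omega] at hA
    rw [Bc, sum_Icc_range (fun k' => (bdef n a k' j : ℤ)) (j+1) (n+1),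
      show n+1+1-(j+1) = n+1-j from by omega]
    rw [← hA, sum_Icc_range (fun i => ∑ t ∈ Finset.range j, a (i+t) t) 1 (n+1-j),
      show n+1-j+1-1 = n+1-j from by omega, ← Finset.sum_neg_distrib]
    refine Finset.sum_congr rfl fun s hs => ?_
    rw [Finset.mem_range] at hs
    rw [bdef_val n a ha (j+1+s) j (by omega) (by omega)]
    congr 1
    refine Finset.sum_congr rfl fun t _ => ?_
    rw [show j+1+s-j+t = 1+s+t from by omega]

lemma Adef_bdef (n : ℕ) (hn : 1 ≤ n) (a : ℕ → ℕ → ℤ) (ha : ACond n a) :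
    ∀ j m, 1 ≤ j → j ≤ n → m ≤ j → Adef n (bdef n a) j m = a j m := by
  intro j m hj1 hjn hm
  by_cases hmj : m = j
  · subst hmj
    rw [Adef, if_pos rfl, Bc_bdef n hn a ha (m+1) (by omega) (by omega),
      Bc_bdef n hn a ha m hj1 (by omega),
      sum_Icc_bot (fun i => a i i) (le_trans le_rfl hjn)]
    ring
  · rw [Adef, if_neg hmj]
    rw [bdef_val n a ha j m (by omega) (by omega),
      bdef_val n a ha (j+1) (m+1) (by omega) (by omega)]
    have e1 : ∀ t, j+1-(m+1)+t = j-m+t := by intro t; omega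
    simp only [e1]
    rw [Finset.sum_range_succ, show j-m+m = j from by omega]
    ring

end NakAux


/-- The `X`-form map `(b_k^i) ↦ M` is a bijection from families of nonnegative
integers `b_k^i` (`1 ≤ i ≤ n`, `i < k ≤ n+1`; normalized to vanish outside)
onto `M(p_1,…,p_n; r; ∞)`; in particular `M(p_1,…,p_n; r; ∞)` is in bijection
with `M(1,…,1; 0; ∞) = M(∞)` compatibly with the exponent families. -/
theorem XformP_bijOn (n : ℕ) (hn : 1 ≤ n) (p : ℕ → ℕ)
    (hp : ∀ i, 1 ≤ i → i ≤ n → 1 ≤ p i) (r : ℤ) :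
    Set.BijOn (XformP n p r)
      {b : ℕ → ℕ → ℕ | ∀ k i, ¬(1 ≤ i ∧ i ≤ n ∧ i < k ∧ k ≤ n + 1) → b k i = 0}
      (MsetInf n p r) := by
  refine ⟨?_, ?_, ?_⟩
  · -- MapsTo
    intro b hb
    have hb0 : ∀ k, b k 0 = 0 := fun k => hb k 0 (by omega)
    exact ⟨NakAux.Adef n b, NakAux.key2 n hn b hb0, NakAux.key1 n p r b hb0⟩
  · -- InjOn
    intro b hb b' hb' heq
    have hb0 : ∀ k, b k 0 = 0 := fun k => hb k 0 (by omega)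
    have hb0' : ∀ k, b' k 0 = 0 := fun k => hb' k 0 (by omega)
    have heq' : Yform n p r (NakAux.Adef n b) = Yform n p r (NakAux.Adef n b') :=
      (NakAux.key1 n p r b hb0).symm.trans (heq.trans (NakAux.key1 n p r b' hb0'))
    have hA : ∀ J M, 1 ≤ J → J ≤ n → M ≤ J →
        NakAux.Adef n b J M = NakAux.Adef n b' J M := by
      intro J M hJ1 hJn hM
      have h1 := NakAux.Yform_apply n p r (NakAux.Adef n b) J M hJ1 hJn hM
      have h2 := NakAux.Yform_apply n p r (NakAux.Adef n b') J M hJ1 hJn hM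
      rw [heq', h2] at h1
      by_cases hMJ : M = J
      · subst hMJ
        rw [if_pos rfl, if_pos rfl, Prod.mk.injEq] at h1
        exact h1.2.symm
      · rw [if_neg hMJ, if_neg hMJ, Prod.mk.injEq] at h1
        exact h1.2.symm
    funext k i
    by_cases hcond : 1 ≤ i ∧ i ≤ n ∧ i < k ∧ k ≤ n + 1
    · obtain ⟨hc1, hc2, hc3, hc4⟩ := hcond
      have r1 := NakAux.brec n b hb i k hc1 hc3 hc4
      have r2 := NakAux.brec n b' hb' i k hc1 hc3 hc4
      have hsum : ∑ j ∈ Finset.range i, NakAux.Adef n b (k-i+j) j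
          = ∑ j ∈ Finset.range i, NakAux.Adef n b' (k-i+j) j := by
        refine Finset.sum_congr rfl fun j hj => ?_
        rw [Finset.mem_range] at hj
        exact hA (k-i+j) j (by omega) (by omega) (by omega)
      have : (b k i : ℤ) = (b' k i : ℤ) := by rw [r1, hsum, ← r2]
      exact_mod_cast this
    · rw [hb k i hcond, hb' k i hcond]
  · -- SurjOn
    rintro M ⟨a, ha, rfl⟩
    refine ⟨NakAux.bdef n a, ?_, ?_⟩
    · intro k i hni
      rw [NakAux.bdef, if_neg (fun hc => hni
        ⟨hc.1, Nat.lt_succ_iff.mp (lt_of_lt_of_le hc.2.1 hc.2.2), hc.2.1, hc.2.2⟩)]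
    · have hb0 : ∀ k, NakAux.bdef n a k 0 = 0 := fun k => by
        rw [NakAux.bdef, if_neg (by omega)]
      rw [NakAux.key1 n p r _ hb0]
      exact NakAux.Yform_congr n p r _ a (NakAux.Adef_bdef n hn a ha)
end

section
/- Let (b_k^i) with b_k^i ≥ 0 (1 ≤ i ≤ n, i < k ≤ n+1) encode M ∈ M(∞) in the X-form M = ∏_{i=1}^n ( X_i(-i)^{(n-i+1, -∑_{k=i+1}^{n+1} b_k^i)} ∏_{k=i+1}^{n+1} X_k(-i)^{(0, b_k^i)} ). Expanding into Y-variables, the exponent of Y_i(-m) for 1 ≤ m ≤ i-1 has second component b_i^m − b_{i+1}^{m+1}, the exponent of Y_i(0) has second component −b_{i+1}^1, and the exponent of Y_i(-i) has the form (1, −∑_{k=i+1}^{n+1} b_k^i + ∑_{k=i+2}^{n+1} b_k^{i+1}); all other Y-exponents vanish. -/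
open Finset

lemma Xpair_apply (n k : ℕ) (m : ℤ) (v : ℤ × ℤ) (j : ℕ) (t : ℤ) :
    (Xpair n k m v) (j, t) =
      (if k = j ∧ m = t ∧ 1 ≤ j ∧ j ≤ n then v else 0) +
      (if k = j + 1 ∧ m + 1 = t ∧ 1 ≤ j ∧ j ≤ n then -v else 0) := by
  simp only [Xpair, Ypair, Finsupp.add_apply]
  congr 1
  · split_ifs with h1 h2 h2 <;> simp_all [Finsupp.single_apply, Prod.ext_iff] <;> omega
  · split_ifs with h1 h2 h2 <;> simp_all [Finsupp.single_apply, Prod.ext_iff] <;> omega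

lemma inner_eval (n i j : ℕ) (t : ℤ) (b : ℕ → ℕ → ℕ) :
    ∑ k ∈ Finset.Icc (i+1) (n+1),
      ((if k = j ∧ -(i:ℤ) = t ∧ 1 ≤ j ∧ j ≤ n then ((0:ℤ), (b k i : ℤ)) else 0)
        + if k = j+1 ∧ -(i:ℤ)+1 = t ∧ 1 ≤ j ∧ j ≤ n then -((0:ℤ), (b k i : ℤ)) else 0)
    = (if i+1 ≤ j ∧ -(i:ℤ) = t ∧ 1 ≤ j ∧ j ≤ n then ((0:ℤ), (b j i : ℤ)) else 0)
      + (if i ≤ j ∧ -(i:ℤ)+1 = t ∧ 1 ≤ j ∧ j ≤ n then -((0:ℤ), (b (j+1) i : ℤ)) else 0) := by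
  rw [Finset.sum_add_distrib]
  congr 1
  · simp only [ite_and]
    rw [Finset.sum_ite_eq' (Finset.Icc (i+1) (n+1)) j]
    simp only [mem_Icc]
    split_ifs <;> first | rfl | (exfalso; omega)
  · simp only [ite_and]
    rw [Finset.sum_ite_eq' (Finset.Icc (i+1) (n+1)) (j+1)]
    simp only [mem_Icc]
    split_ifs <;> first | rfl | (exfalso; omega)


/-- The explicit change of variables (equation (equ:jin49)): expanding the
`X`-form of `M ∈ M(∞)` into `Y`-variables, for each `1 ≤ i ≤ n` the exponent
of `Y_i(-m)` (`1 ≤ m ≤ i-1`) has second component `b_i^m − b_{i+1}^{m+1}` and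
first component `0`; the exponent of `Y_i(0)` is `(0, −b_{i+1}^1)`; the
exponent of `Y_i(-i)` is `(1, −∑_{k=i+1}^{n+1} b_k^i + ∑_{k=i+2}^{n+1}
b_k^{i+1})`; and all other `Y`-exponents vanish. -/
theorem Minf_Y_coeffs (n : ℕ) (hn : 1 ≤ n) (b : ℕ → ℕ → ℕ)
    (hb : ∀ k i, ¬(1 ≤ i ∧ i ≤ n ∧ i < k ∧ k ≤ n + 1) → b k i = 0) :
    (∀ i, 1 ≤ i → i ≤ n → ∀ m : ℕ, 1 ≤ m → m ≤ i - 1 →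
      (Minf n b) (i, -(m : ℤ)) = (0, (b i m : ℤ) - (b (i + 1) (m + 1) : ℤ))) ∧
    (∀ i, 1 ≤ i → i ≤ n →
      (Minf n b) (i, 0) = (0, -((b (i + 1) 1 : ℤ)))) ∧
    (∀ i, 1 ≤ i → i ≤ n →
      (Minf n b) (i, -(i : ℤ)) =
        (1, -∑ k ∈ Finset.Icc (i + 1) (n + 1), (b k i : ℤ)
          + ∑ k ∈ Finset.Icc (i + 2) (n + 1), (b k (i + 1) : ℤ))) ∧
    (∀ i : ℕ, ∀ m : ℤ, (i < 1 ∨ n < i ∨ m < -(i : ℤ) ∨ 0 < m) →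
      (Minf n b) (i, m) = 0) := by
  refine ⟨?_, ?_, ?_, ?_⟩
  · -- Part 1 : Y_j(-m), 1 ≤ m ≤ j-1
    intro j hj1 hj2 m hm1 hm2
    simp only [Minf, Finsupp.finset_sum_apply, Finsupp.add_apply, Xpair_apply]
    have H : ∀ i ∈ Finset.Icc 1 n,
        ((if i = j ∧ -(i:ℤ) = -(m:ℤ) ∧ 1 ≤ j ∧ j ≤ n then
            ((n:ℤ) - i + 1, -∑ k ∈ Finset.Icc (i + 1) (n + 1), (b k i : ℤ)) else 0) +
          (if i = j + 1 ∧ -(i:ℤ) + 1 = -(m:ℤ) ∧ 1 ≤ j ∧ j ≤ n then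
            -((n:ℤ) - i + 1, -∑ k ∈ Finset.Icc (i + 1) (n + 1), (b k i : ℤ)) else 0)) +
        (∑ k ∈ Finset.Icc (i + 1) (n + 1),
          ((if k = j ∧ -(i:ℤ) = -(m:ℤ) ∧ 1 ≤ j ∧ j ≤ n then ((0:ℤ), (b k i : ℤ)) else 0) +
            if k = j + 1 ∧ -(i:ℤ) + 1 = -(m:ℤ) ∧ 1 ≤ j ∧ j ≤ n then -((0:ℤ), (b k i : ℤ)) else 0))
        = (if i = m then ((0:ℤ), (b j m : ℤ)) else 0) +
          (if i = m + 1 then -((0:ℤ), (b (j+1) (m+1) : ℤ)) else 0) := by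
      intro i hi
      rw [mem_Icc] at hi
      rw [inner_eval]
      by_cases h1 : i = m
      · subst h1; split_ifs <;> first | (exfalso; omega) | simp
      by_cases h2 : i = m + 1
      · subst h2; split_ifs <;> first | (exfalso; omega) | simp
      split_ifs <;> first | (exfalso; omega) | simp
    rw [Finset.sum_congr rfl H, Finset.sum_add_distrib,
      Finset.sum_ite_eq' (Finset.Icc 1 n) m, Finset.sum_ite_eq' (Finset.Icc 1 n) (m+1),
      if_pos (by rw [mem_Icc]; omega), if_pos (by rw [mem_Icc]; omega)]
    simp [Prod.ext_iff] <;> ring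
  · -- Part 2 : Y_j(0)
    intro j hj1 hj2
    simp only [Minf, Finsupp.finset_sum_apply, Finsupp.add_apply, Xpair_apply]
    have H : ∀ i ∈ Finset.Icc 1 n,
        ((if i = j ∧ -(i:ℤ) = 0 ∧ 1 ≤ j ∧ j ≤ n then
            ((n:ℤ) - i + 1, -∑ k ∈ Finset.Icc (i + 1) (n + 1), (b k i : ℤ)) else 0) +
          (if i = j + 1 ∧ -(i:ℤ) + 1 = 0 ∧ 1 ≤ j ∧ j ≤ n then
            -((n:ℤ) - i + 1, -∑ k ∈ Finset.Icc (i + 1) (n + 1), (b k i : ℤ)) else 0)) +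
        (∑ k ∈ Finset.Icc (i + 1) (n + 1),
          ((if k = j ∧ -(i:ℤ) = 0 ∧ 1 ≤ j ∧ j ≤ n then ((0:ℤ), (b k i : ℤ)) else 0) +
            if k = j + 1 ∧ -(i:ℤ) + 1 = 0 ∧ 1 ≤ j ∧ j ≤ n then -((0:ℤ), (b k i : ℤ)) else 0))
        = (if i = 1 then -((0:ℤ), (b (j+1) 1 : ℤ)) else 0) := by
      intro i hi
      rw [mem_Icc] at hi
      rw [inner_eval]
      by_cases h1 : i = 1
      · subst h1; split_ifs <;> first | (exfalso; omega) | simp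
      split_ifs <;> first | (exfalso; omega) | simp
    rw [Finset.sum_congr rfl H, Finset.sum_ite_eq' (Finset.Icc 1 n) 1,
      if_pos (by rw [mem_Icc]; omega)]
    simp [Prod.ext_iff]
  · -- Part 3 : Y_j(-j)
    intro j hj1 hj2
    simp only [Minf, Finsupp.finset_sum_apply, Finsupp.add_apply, Xpair_apply]
    have H : ∀ i ∈ Finset.Icc 1 n,
        ((if i = j ∧ -(i:ℤ) = -(j:ℤ) ∧ 1 ≤ j ∧ j ≤ n then
            ((n:ℤ) - i + 1, -∑ k ∈ Finset.Icc (i + 1) (n + 1), (b k i : ℤ)) else 0) +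
          (if i = j + 1 ∧ -(i:ℤ) + 1 = -(j:ℤ) ∧ 1 ≤ j ∧ j ≤ n then
            -((n:ℤ) - i + 1, -∑ k ∈ Finset.Icc (i + 1) (n + 1), (b k i : ℤ)) else 0)) +
        (∑ k ∈ Finset.Icc (i + 1) (n + 1),
          ((if k = j ∧ -(i:ℤ) = -(j:ℤ) ∧ 1 ≤ j ∧ j ≤ n then ((0:ℤ), (b k i : ℤ)) else 0) +
            if k = j + 1 ∧ -(i:ℤ) + 1 = -(j:ℤ) ∧ 1 ≤ j ∧ j ≤ n then -((0:ℤ), (b k i : ℤ)) else 0))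
        = (if i = j then
            ((n:ℤ) - j + 1, -∑ k ∈ Finset.Icc (j + 1) (n + 1), (b k j : ℤ)) else 0) +
          (if i = j + 1 then
            -((n:ℤ) - (j+1) + 1, -∑ k ∈ Finset.Icc (j + 2) (n + 1), (b k (j+1) : ℤ)) else 0) := by
      intro i hi
      rw [mem_Icc] at hi
      rw [inner_eval]
      by_cases h1 : i = j
      · subst h1; split_ifs <;> first | (exfalso; omega) | simp
      by_cases h2 : i = j + 1
      · subst h2
        split_ifs <;> first | (exfalso; omega) | (push_cast; simp)
      split_ifs <;> first | (exfalso; omega) | simp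
    rw [Finset.sum_congr rfl H, Finset.sum_add_distrib,
      Finset.sum_ite_eq' (Finset.Icc 1 n) j, Finset.sum_ite_eq' (Finset.Icc 1 n) (j+1),
      if_pos (by rw [mem_Icc]; omega)]
    by_cases hjn : j + 1 ≤ n
    · rw [if_pos (by rw [mem_Icc]; omega)]
      simp [Prod.ext_iff] <;> ring
    · rw [if_neg (by rw [mem_Icc]; omega)]
      have hj : j = n := by omega
      subst hj
      rw [show Finset.Icc (j+2) (j+1) = ∅ from Finset.Icc_eq_empty (by omega),
        Finset.sum_empty]
      simp [Prod.ext_iff] <;> ring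
  · -- Part 4 : everything else vanishes
    intro j t ht
    simp only [Minf, Finsupp.finset_sum_apply, Finsupp.add_apply, Xpair_apply]
    refine Finset.sum_eq_zero fun i hi => ?_
    rw [mem_Icc] at hi
    rw [inner_eval, if_neg (by omega), if_neg (by omega), if_neg (by omega),
      if_neg (by omega)]
    simp
end

section
/- Let λ = l_1Λ_1 + ··· + l_nΛ_n with l_i ≥ 0 and let M ∈ M(λ) be written in Y-form M = ∏_{i=1}^n ( Y_i(-i)^{a_i^i} ∏_{m=0}^{i-1} Y_i(-m)^{a_i^m} ). Then the family of integers a_i^m (1 ≤ i ≤ n, 0 ≤ m ≤ i) satisfies a_i^i ≥ 0, a_i^0 ≤ 0, l_i = ∑_{k=0}^{n-i} a_{i+k}^i − ∑_{k=0}^{i-1} a_{n-i+1+k}^k for all i, and ∑_{k=0}^{j} a_{i+k}^k ≤ 0 and ∑_{k=0}^{j} a_{i+k}^i ≥ 0 for 1 ≤ j ≤ n−1, 1 ≤ i ≤ n−j, if and only if the corresponding X-form exponents b_k^i (the exponents of the X_j(-m) in the expansion of M in X-form, given by equation (equ:jin2)) satisfy b_k^i ≥ 0, ∑_{j=i}^{n+1}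 b_j^i = ∑_{k=i}^n l_k for each i, and ∑_{k=0}^{j} b_{i+k}^i ≥ ∑_{k=0}^{j} b_{i+1+k}^{i+1} for 0 ≤ j ≤ n−1, 1 ≤ i ≤ n−max{1,j}. -/
open Finset

/-- The `X`-form exponents of `M(λ)` computed from the `Y`-form exponents
`a_i^m` (equation (equ:jin2)): for row `m` (`1 ≤ m ≤ n`), the exponent of
`X_m(-m)` is `∑_{i=m}^n a_i^i`, and the exponent of `X_j(-m)` for
`m < j ≤ n+1` is `−∑_{k=0}^{m-1} a_{j-m+k}^k`. (`a i m` encodes `a_i^m`,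
`bOfA a j m` encodes `b_j^m`.) -/
def bOfA (n : ℕ) (a : ℕ → ℕ → ℤ) (j m : ℕ) : ℤ :=
  if j = m then ∑ i ∈ Finset.Icc m n, a i i
  else -∑ k ∈ Finset.range m, a (j - m + k) k

/-- The `Y`-form defining conditions of `M(λ)` on the exponents `a_i^m`. -/
def ACondLa (n : ℕ) (l : ℕ → ℕ) (a : ℕ → ℕ → ℤ) : Prop :=
  (∀ i, 1 ≤ i → i ≤ n → 0 ≤ a i i ∧ a i 0 ≤ 0) ∧
  (∀ i, 1 ≤ i → i ≤ n →
    (l i : ℤ) = ∑ k ∈ Finset.range (n - i + 1), a (i + k) i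
      - ∑ k ∈ Finset.range i, a (n - i + 1 + k) k) ∧
  (∀ j, 1 ≤ j → j ≤ n - 1 → ∀ i, 1 ≤ i → i ≤ n - j →
    (∑ k ∈ Finset.range (j + 1), a (i + k) k ≤ 0 ∧
     0 ≤ ∑ k ∈ Finset.range (j + 1), a (i + k) i))

/-- The `X`-form defining conditions of `M(λ)` on exponents `b_k^i`. -/
def BCondLa (n : ℕ) (l : ℕ → ℕ) (b : ℕ → ℕ → ℤ) : Prop :=
  (∀ i, 1 ≤ i → i ≤ n → ∀ k, i ≤ k → k ≤ n + 1 → 0 ≤ b k i) ∧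
  (∀ i, 1 ≤ i → i ≤ n →
    ∑ j ∈ Finset.Icc i (n + 1), b j i = ∑ k ∈ Finset.Icc i n, (l k : ℤ)) ∧
  (∀ j, j ≤ n - 1 → ∀ i, 1 ≤ i → i ≤ n - max 1 j →
    ∑ k ∈ Finset.range (j + 1), b (i + 1 + k) (i + 1)
      ≤ ∑ k ∈ Finset.range (j + 1), b (i + k) i)


section Helpers

variable (n : ℕ) (a : ℕ → ℕ → ℤ)

lemma bOfA_diag (i : ℕ) : bOfA n a i i = ∑ t ∈ Finset.Icc i n, a t t := by
  simp [bOfA]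

lemma bOfA_off {j m : ℕ} (h : m < j) :
    bOfA n a j m = -∑ k ∈ Finset.range m, a (j - m + k) k := by
  rw [bOfA, if_neg (by omega)]

lemma Icc_sum_succ {f : ℕ → ℤ} {i N : ℕ} (h : i ≤ N) :
    ∑ t ∈ Finset.Icc i N, f t = f i + ∑ t ∈ Finset.Icc (i+1) N, f t := by
  rw [show Finset.Icc i N = insert i (Finset.Icc (i+1) N) by
    ext t; simp only [Finset.mem_Icc, Finset.mem_insert]; omega,
    Finset.sum_insert (by simp)]

lemma colSum_eq (i j : ℕ) :
    ∑ k ∈ Finset.range (j+1), bOfA n a (i+k) i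
      = (∑ t ∈ Finset.Icc i n, a t t)
        - ∑ k ∈ Finset.range j, ∑ m ∈ Finset.range i, a (k+1+m) m := by
  rw [Finset.sum_range_succ']
  have h1 : ∀ k, bOfA n a (i+(k+1)) i = -∑ m ∈ Finset.range i, a (k+1+m) m := by
    intro k
    rw [bOfA_off n a (by omega)]
    congr 1
    refine Finset.sum_congr rfl fun m _ => ?_
    congr 2
    omega
  simp only [h1, Finset.sum_neg_distrib, add_zero, bOfA_diag]
  ring

lemma colSum_diff {i : ℕ} (hi : i ≤ n) (j : ℕ) :
    (∑ k ∈ Finset.range (j+1), bOfA n a (i+k) i)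
      - ∑ k ∈ Finset.range (j+1), bOfA n a (i+1+k) (i+1)
      = ∑ k ∈ Finset.range (j+1), a (i+k) i := by
  rw [colSum_eq, colSum_eq, Icc_sum_succ hi]
  have hT2 : ∑ k ∈ Finset.range j, ∑ m ∈ Finset.range (i+1), a (k+1+m) m
      = (∑ k ∈ Finset.range j, ∑ m ∈ Finset.range i, a (k+1+m) m)
        + ∑ k ∈ Finset.range j, a (k+1+i) i := by
    rw [← Finset.sum_add_distrib]
    exact Finset.sum_congr rfl fun k _ => Finset.sum_range_succ _ _
  have hR : ∑ k ∈ Finset.range (j+1), a (i+k) i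
      = a i i + ∑ k ∈ Finset.range j, a (k+1+i) i := by
    rw [Finset.sum_range_succ', Nat.add_zero, add_comm]
    exact congrArg _ (Finset.sum_congr rfl fun k _ => by rw [Nat.add_comm i (k+1)])
  rw [hT2, hR]
  ring

lemma F_eq {i : ℕ} (hi : i ≤ n + 1) :
    ∑ j ∈ Finset.Icc i (n+1), bOfA n a j i
      = ∑ k ∈ Finset.range ((n+1-i)+1), bOfA n a (i+k) i := by
  rw [← Finset.Ico_add_one_right_eq_Icc, Finset.sum_Ico_eq_sum_range]
  congr 2
  omega

lemma F_diff {i : ℕ} (hi : i ≤ n) :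
    (∑ j ∈ Finset.Icc i (n+1), bOfA n a j i)
      - ∑ j ∈ Finset.Icc (i+1) (n+1), bOfA n a j (i+1)
      = ∑ k ∈ Finset.range (n-i+1), a (i+k) i
        - ∑ k ∈ Finset.range i, a (n-i+1+k) k := by
  rw [F_eq n a (by omega), F_eq n a (by omega),
    show n+1-i = (n-i)+1 from by omega, show n+1-(i+1) = n-i from by omega,
    colSum_eq, colSum_eq, Icc_sum_succ hi]
  have hT : ∑ k ∈ Finset.range (n-i+1), ∑ m ∈ Finset.range i, a (k+1+m) m
      = (∑ k ∈ Finset.range (n-i), ∑ m ∈ Finset.range i, a (k+1+m) m)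
        + ∑ m ∈ Finset.range i, a (n-i+1+m) m := by
    rw [Finset.sum_range_succ]
  have hT2 : ∑ k ∈ Finset.range (n-i), ∑ m ∈ Finset.range (i+1), a (k+1+m) m
      = (∑ k ∈ Finset.range (n-i), ∑ m ∈ Finset.range i, a (k+1+m) m)
        + ∑ k ∈ Finset.range (n-i), a (k+1+i) i := by
    rw [← Finset.sum_add_distrib]
    exact Finset.sum_congr rfl fun k _ => Finset.sum_range_succ _ _
  have hR : ∑ k ∈ Finset.range (n-i+1), a (i+k) i
      = a i i + ∑ k ∈ Finset.range (n-i), a (k+1+i) i := by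
    rw [Finset.sum_range_succ', Nat.add_zero, add_comm]
    exact congrArg _ (Finset.sum_congr rfl fun k _ => by rw [Nat.add_comm i (k+1)])
  rw [hT, hT2, hR]
  ring

lemma F_top : ∑ j ∈ Finset.Icc (n+1) (n+1), bOfA n a j (n+1) = 0 := by
  rw [Finset.Icc_self, Finset.sum_singleton, bOfA_diag,
    Finset.Icc_eq_empty (by omega), Finset.sum_empty]

end Helpers
/-- Equivalence of the two defining condition systems for `M(λ)` under the
invertible change of variables between the `Y`-form exponents `a_i^m` and the
`X`-form exponents `b_k^i`. -/
theorem ACondLa_iff_BCondLa (n : ℕ) (hn : 1 ≤ n) (l : ℕ → ℕ)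
    (a : ℕ → ℕ → ℤ)
    (ha : ∀ i m, ¬(1 ≤ i ∧ i ≤ n ∧ m ≤ i) → a i m = 0) :
    ACondLa n l a ↔ BCondLa n l (bOfA n a) := by
  clear ha
  constructor
  · rintro ⟨hA1, hA2, hA3⟩
    refine ⟨?_, ?_, ?_⟩
    · -- B1
      intro i h1 hin k hik hkn
      rcases eq_or_lt_of_le hik with rfl | hlt
      · rw [bOfA_diag]
        refine Finset.sum_nonneg fun t ht => ?_
        rw [Finset.mem_Icc] at ht
        exact (hA1 t (by omega) (by omega)).1
      · rw [bOfA_off n a hlt, neg_nonneg]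
        by_cases hi1 : i = 1
        · subst hi1
          rw [Finset.sum_range_one, Nat.add_zero]
          exact (hA1 (k-1) (by omega) (by omega)).2
        · have h3 := (hA3 (i-1) (by omega) (by omega) (k-i) (by omega) (by omega)).1
          rw [show i - 1 + 1 = i from by omega] at h3
          calc ∑ m ∈ Finset.range i, a (k - i + m) m
              = ∑ m ∈ Finset.range i, a (k - i + m) m := rfl
            _ ≤ 0 := h3
    · -- B2
      have claim : ∀ d, d ≤ n →
          ∑ j ∈ Finset.Icc (n+1-d) (n+1), bOfA n a j (n+1-d)
            = ∑ k ∈ Finset.Icc (n+1-d) n, (l k : ℤ) := by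
        intro d
        induction d with
        | zero =>
          intro _
          simp only [Nat.sub_zero]
          rw [F_top, Finset.Icc_eq_empty (by omega), Finset.sum_empty]
        | succ d ih =>
          intro hd
          set i := n + 1 - (d+1) with hidef
          have hi1 : 1 ≤ i := by omega
          have hin : i ≤ n := by omega
          have hsucc : n + 1 - d = i + 1 := by omega
          have ih' := ih (by omega)
          rw [hsucc] at ih'
          have hFd := F_diff n a hin
          have hl := hA2 i hi1 hin
          rw [Icc_sum_succ (f := fun k => (l k : ℤ)) hin]
          have : ∑ j ∈ Finset.Icc i (n+1), bOfA n a j i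
              = (∑ j ∈ Finset.Icc i (n+1), bOfA n a j i
                  - ∑ j ∈ Finset.Icc (i+1) (n+1), bOfA n a j (i+1))
                + ∑ j ∈ Finset.Icc (i+1) (n+1), bOfA n a j (i+1) := by ring
          rw [this, hFd, ih', ← hl]
      intro i h1 hin
      have := claim (n+1-i) (by omega)
      rw [show n+1-(n+1-i) = i from by omega] at this
      exact this
    · -- B3
      intro j hj i h1 hi
      have key := colSum_diff n a (show i ≤ n by omega) j
      have hQ : 0 ≤ ∑ k ∈ Finset.range (j+1), a (i+k) i := by
        rcases Nat.eq_zero_or_pos j with rfl | hj1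
        · rw [Finset.sum_range_one, Nat.add_zero]
          exact (hA1 i h1 (by omega)).1
        · exact (hA3 j hj1 (by omega) i h1 (by omega)).2
      linarith
  · rintro ⟨hB1, hB2, hB3⟩
    refine ⟨?_, ?_, ?_⟩
    · -- A1
      intro i h1 hin
      constructor
      · rcases eq_or_lt_of_le hin with rfl | hlt
        · have := hB1 i h1 le_rfl i le_rfl (by omega)
          rw [bOfA_diag, Finset.Icc_self, Finset.sum_singleton] at this
          exact this
        · have hle := hB3 0 (by omega) i h1 (by omega)
          have key := colSum_diff n a (by omega : i ≤ n) 0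
          simp only [zero_add, Finset.sum_range_one, Nat.add_zero] at hle key
          linarith
      · have := hB1 1 le_rfl hn (i+1) (by omega) (by omega)
        rw [bOfA_off n a (by omega), Finset.sum_range_one,
          show i + 1 - 1 + 0 = i from by omega, neg_nonneg] at this
        exact this
    · -- A2
      intro i h1 hin
      have hFd := F_diff n a hin
      have h2 := hB2 i h1 hin
      have h3 : ∑ j ∈ Finset.Icc (i+1) (n+1), bOfA n a j (i+1)
          = ∑ k ∈ Finset.Icc (i+1) n, (l k : ℤ) := by
        rcases eq_or_lt_of_le hin with rfl | hlt
        · rw [F_top, Finset.Icc_eq_empty (by omega), Finset.sum_empty]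
        · exact hB2 (i+1) (by omega) (by omega)
      have hG := Icc_sum_succ (f := fun k => (l k : ℤ)) hin
      rw [h2, h3] at hFd
      linarith
    · -- A3
      intro j hj1 hjn i h1 hin
      constructor
      · have := hB1 (j+1) (by omega) (by omega) (i+j+1) (by omega) (by omega)
        rw [bOfA_off n a (by omega), neg_nonneg,
          show i + j + 1 - (j+1) = i from by omega] at this
        exact this
      · have key := colSum_diff n a (by omega : i ≤ n) j
        have hle := hB3 j (by omega) i h1 (by omega)
        linarith
end
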